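/- arXiv:2003.12977 — 5 statements merged into one kernel-verified Lean document; each statement's English description precedes it below -/
import Mathlib

section
/- Let n = 2m+1, let R_n be the dihedral quandle of order n, and let D(R_n) be its symmetric double with the good involution ρ exchanging x⁺ and x⁻. The quotient set D(R_n) ⊗ D(R_n) / ⟨τ, ρ⟩ has exactly 2(m+1) = n+1 elements, namely {E(k)^{+,+}, E(k)^{−,−}} and {E(k)^{+,−}, E(k)^{−,+}} for k = 0, 1, …, m, where E(k)^{ε,δ} = {(i, i+k)^{ε,δ}, (i, i−k)^{ε,δ} : i ∈ ℤ/nℤ}. -/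
/-! Under `⟨≈, τ, ρ⟩` a pair `((x, ε), (y, δ))` of `D(R_n)` keeps two invariants: the circular
distance between `x` and `y`, since a reflection `z ↦ 2c − z` and the swap `τ` only change the sign
of `y − x`, and whether `ε = δ`, since `ρ` flips both signs. Conversely, for odd `n` the element `2`
is invertible in `ℤ/nℤ`, so two reflections compose to an arbitrary translation; together with `τ`
and `ρ` this connects any two pairs with the same invariants, so the classes are exactly the
fibres of the invariant. -/

/-- A quandle: a set with two binary operations `op` (`∗`) and `inv` (`∗̄`)
satisfying (Q1), (Q2), (Q3). -/
structure QuandleStr (X : Type) where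
  op : X → X → X
  inv : X → X → X
  q1 : ∀ x, op x x = x
  q2a : ∀ x y, inv (op x y) y = x
  q2b : ∀ x y, op (inv x y) y = x
  q3 : ∀ x y z, op (op x y) z = op (op x z) (op y z)

namespace QuandleStr

variable {X Y : Type} (Q : QuandleStr X)

lemma inv_self (x : X) : Q.inv x x = x := by
  have h := Q.q2a x x
  rwa [Q.q1] at h

lemma op_right_cancel {a b : X} (z : X) (h : Q.op a z = Q.op b z) : a = b := by
  have h2 := congrArg (fun t => Q.inv t z) h
  simpa [Q.q2a] using h2

lemma distA (x y z : X) : Q.inv (Q.op x y) z = Q.op (Q.inv x z) (Q.inv y z) := by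
  apply Q.op_right_cancel z
  rw [Q.q2b, Q.q3, Q.q2b, Q.q2b]

lemma distB (x y z : X) : Q.op (Q.inv x y) z = Q.inv (Q.op x z) (Q.op y z) := by
  have h : Q.op (Q.op (Q.inv x y) y) z = Q.op (Q.op (Q.inv x y) z) (Q.op y z) := Q.q3 _ _ _
  rw [Q.q2b] at h
  have h2 := congrArg (fun t => Q.inv t (Q.op y z)) h
  simpa [Q.q2a] using h2.symm

lemma distD (x y z : X) : Q.inv (Q.inv x y) z = Q.inv (Q.inv x z) (Q.inv y z) := by
  apply Q.op_right_cancel z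
  rw [Q.q2b, Q.distB, Q.q2b, Q.q2b]

/-- One step of the relation generating the tensor product:
`(x₁, x₂) ≈ (x₁ ∗ z, x₂ ∗ z)`. -/
def tensorStep (p q : X × X) : Prop :=
  ∃ z, q = (Q.op p.1 z, Q.op p.2 z)

/-- The equivalence relation `≈` defining the tensor product `X ⊗ X`:
the equivalence relation generated by `(x₁, x₂) ≈ (x₁ ∗ z, x₂ ∗ z)`. -/
def tensorEqv : X × X → X × X → Prop :=
  Relation.EqvGen Q.tensorStep

/-- The tensor product `X ⊗ X` of a quandle. -/
def Tensor : Type :=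
  Quotient (Relation.EqvGen.setoid Q.tensorStep)

/-- The symmetric double `D(X)` of a quandle, realized on `X × Bool`
(`(x, true)` is `x⁺` and `(x, false)` is `x⁻`), with
`x^ε ∗ y⁺ = (x∗y)^ε`, `x^ε ∗ y⁻ = (x∗̄y)^ε`, `x^ε ∗̄ y⁺ = (x∗̄y)^ε`,
`x^ε ∗̄ y⁻ = (x∗y)^ε`. -/
def double : QuandleStr (X × Bool) where
  op a b := (if b.2 then Q.op a.1 b.1 else Q.inv a.1 b.1, a.2)
  inv a b := (if b.2 then Q.inv a.1 b.1 else Q.op a.1 b.1, a.2)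
  q1 := by rintro ⟨x, ε⟩; cases ε <;> simp [Q.q1, Q.inv_self]
  q2a := by rintro ⟨x, ε⟩ ⟨y, δ⟩; cases δ <;> simp [Q.q2a, Q.q2b]
  q2b := by rintro ⟨x, ε⟩ ⟨y, δ⟩; cases δ <;> simp [Q.q2a, Q.q2b]
  q3 := by
    rintro ⟨x, ε⟩ ⟨y, δ⟩ ⟨z, γ⟩
    cases δ <;> cases γ
    · show (Q.inv (Q.inv x y) z, ε) = (Q.inv (Q.inv x z) (Q.inv y z), ε)
      rw [Q.distD]
    · show (Q.op (Q.inv x y) z, ε) = (Q.inv (Q.op x z) (Q.op y z), ε)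
      rw [Q.distB]
    · show (Q.inv (Q.op x y) z, ε) = (Q.op (Q.inv x z) (Q.inv y z), ε)
      rw [Q.distA]
    · show (Q.op (Q.op x y) z, ε) = (Q.op (Q.op x z) (Q.op y z), ε)
      rw [Q.q3]

/-- The equivalence relation generated by `≈` and the swap `τ`. -/
def tensorTauEqv : X × X → X × X → Prop :=
  Relation.EqvGen (fun p q => Q.tensorStep p q ∨ q = p.swap)

/-- The quotient `X ⊗ X / ⟨τ⟩`. -/
def TensorTau : Type :=
  Quotient (Relation.EqvGen.setoid (fun p q => Q.tensorStep p q ∨ q = p.swap))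

/-- The equivalence relation generated by `≈` and `(x₁, x₂) ↦ (ρ(x₁), ρ(x₂))`
for an involution `r` of `X`. -/
def tensorRhoEqv (r : X → X) : X × X → X × X → Prop :=
  Relation.EqvGen (fun p q => Q.tensorStep p q ∨ q = (r p.1, r p.2))

/-- The quotient `X ⊗ X / ⟨ρ⟩`. -/
def TensorRho (r : X → X) : Type :=
  Quotient (Relation.EqvGen.setoid (fun p q => Q.tensorStep p q ∨ q = (r p.1, r p.2)))

/-- The equivalence relation generated by `≈`, `τ` and `ρ`. -/
def tensorTauRhoEqv (r : X → X) : X × X → X × X → Prop :=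
  Relation.EqvGen (fun p q => Q.tensorStep p q ∨ q = p.swap ∨ q = (r p.1, r p.2))

/-- The quotient `X ⊗ X / ⟨τ, ρ⟩`. -/
def TensorTauRho (r : X → X) : Type :=
  Quotient (Relation.EqvGen.setoid
    (fun p q => Q.tensorStep p q ∨ q = p.swap ∨ q = (r p.1, r p.2)))

end QuandleStr

/-- The good involution `ρ` on the symmetric double `D(X) = X × Bool`,
exchanging `x⁺` and `x⁻`. -/
def doubleRho {X : Type} : X × Bool → X × Bool := fun a => (a.1, !a.2)

/-- The dihedral quandle `R_n` of order `n`: `ℤ/nℤ` with `x ∗ y = x ∗̄ y = 2y − x`. -/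
def dihedral (n : ℕ) : QuandleStr (ZMod n) where
  op x y := 2 * y - x
  inv x y := 2 * y - x
  q1 := by intro x; ring
  q2a := by intro x y; ring
  q2b := by intro x y; ring
  q3 := by intro x y z; ring

/-- The distance `d_n` on `ℤ/nℤ`:
`d_n(x, y) = min {|a − b| : a, b ∈ ℤ, a ≡ x, b ≡ y (mod n)}`. -/
noncomputable def ddist (n : ℕ) (x y : ZMod n) : ℕ :=
  sInf {d : ℕ | ∃ a b : ℤ, (a : ZMod n) = x ∧ (b : ZMod n) = y ∧ (a - b).natAbs = d}

/-- `x ∈ ℤ/nℤ` is represented by an even integer. -/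
def isEvenClass (n : ℕ) (x : ZMod n) : Prop :=
  ∃ a : ℤ, Even a ∧ (a : ZMod n) = x

/-- `x ∈ ℤ/nℤ` is represented by an odd integer. -/
def isOddClass (n : ℕ) (x : ZMod n) : Prop :=
  ∃ a : ℤ, Odd a ∧ (a : ZMod n) = x

/-- `E(k)^{ε,δ} = {(i, i+k)^{ε,δ}, (i, i−k)^{ε,δ} : i ∈ ℤ/nℤ}`. -/
def EsetD (n k : ℕ) (ε δ : Bool) : Set ((ZMod n × Bool) × (ZMod n × Bool)) :=
  {p | ∃ i : ZMod n,
    p = ((i, ε), (i + (k : ZMod n), δ)) ∨ p = ((i, ε), (i - (k : ZMod n), δ))}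


namespace ZMod

variable {n : ℕ}

lemma exists_two_mul_eq_of_odd (hn : Odd n) (t : ZMod n) : ∃ c, 2 * c = t := by
  obtain ⟨m, rfl⟩ := hn
  refine ⟨(m + 1) * t, ?_⟩
  have h := natCast_self (2 * m + 1)
  push_cast at h
  linear_combination t * h

lemma natAbs_valMinAbs_eq_natCast_iff {k : ℕ} (hk : k ≤ n / 2) (d : ZMod n) :
    d.valMinAbs.natAbs = k ↔ d = k ∨ d = -k := by
  conv_lhs => rw [← Int.natAbs_natCast k, ← valMinAbs_natCast_of_le_half hk]
  exact natAbs_valMinAbs_eq_natAbs_valMinAbs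

end ZMod

namespace QuandleStr

variable {X : Type} (Q : QuandleStr X)

lemma tensorTauRhoEqv_swap (r : X → X) (p : X × X) : Q.tensorTauRhoEqv r p p.swap :=
  .rel _ _ (.inr (.inl rfl))

lemma tensorTauRhoEqv_rho (r : X → X) (p : X × X) : Q.tensorTauRhoEqv r p (r p.1, r p.2) :=
  .rel _ _ (.inr (.inr rfl))

/-- When the signs differ, the swap has to be followed by `ρ`. -/
lemma double_tensorTauRhoEqv_swap_points (x y : X) (ε δ : Bool) :
    Q.double.tensorTauRhoEqv doubleRho ((x, ε), (y, δ)) ((y, ε), (x, δ)) := by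
  have hswap := Q.double.tensorTauRhoEqv_swap doubleRho ((x, ε), (y, δ))
  have hρ := Q.double.tensorTauRhoEqv_rho doubleRho ((y, δ), (x, ε))
  cases ε <;> cases δ
  exacts [hswap, .trans _ _ _ hswap hρ, .trans _ _ _ hswap hρ, hswap]

end QuandleStr

namespace dihedral

variable {n : ℕ}

@[simp]
lemma double_op (a b : ZMod n × Bool) : (dihedral n).double.op a b = (2 * b.1 - a.1, a.2) := by
  obtain ⟨_, _ | _⟩ := b <;> rfl

/-- The index `k` of `E(k)`, and whether the two signs differ. -/
def tensorInvariant (p : (ZMod n × Bool) × (ZMod n × Bool)) : ℕ × Bool :=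
  ((p.2.1 - p.1.1).valMinAbs.natAbs, xor p.1.2 p.2.2)

lemma tensorInvariant_eq_of_tensorTauRhoEqv {p q : (ZMod n × Bool) × (ZMod n × Bool)}
    (h : (dihedral n).double.tensorTauRhoEqv doubleRho p q) :
    tensorInvariant p = tensorInvariant q := by
  induction h with
  | rel p q hpq =>
    obtain ⟨⟨x, ε⟩, ⟨y, δ⟩⟩ := p
    rcases hpq with ⟨⟨c, _⟩, rfl⟩ | rfl | rfl
    · simp [tensorInvariant, ← ZMod.natAbs_valMinAbs_neg (y - x)]
    · simp [tensorInvariant, ← ZMod.natAbs_valMinAbs_neg (y - x), Bool.xor_comm]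
    · simp [tensorInvariant, doubleRho]
  | refl => rfl
  | symm _ _ _ ih => exact ih.symm
  | trans _ _ _ _ _ ih₁ ih₂ => exact ih₁.trans ih₂

lemma tensorTauRhoEqv_reflect (x y c : ZMod n) (ε δ : Bool) :
    (dihedral n).double.tensorTauRhoEqv doubleRho
      ((x, ε), (y, δ)) ((2 * c - x, ε), (2 * c - y, δ)) :=
  .rel _ _ (.inl ⟨(c, true), rfl⟩)

lemma tensorTauRhoEqv_translate_two_mul (x y c : ZMod n) (ε δ : Bool) :
    (dihedral n).double.tensorTauRhoEqv doubleRho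
      ((x, ε), (y, δ)) ((x + 2 * c, ε), (y + 2 * c, δ)) := by
  have h := Relation.EqvGen.trans _ _ _ (tensorTauRhoEqv_reflect x y 0 ε δ)
    (tensorTauRhoEqv_reflect (2 * 0 - x) (2 * 0 - y) c ε δ)
  simp only [show ∀ z : ZMod n, 2 * c - (2 * 0 - z) = z + 2 * c from fun z => by ring] at h
  exact h

lemma tensorTauRhoEqv_of_sub_eq_sub (hn : Odd n) {x y x' y' : ZMod n} (ε δ : Bool)
    (h : y' - x' = y - x) :
    (dihedral n).double.tensorTauRhoEqv doubleRho ((x, ε), (y, δ)) ((x', ε), (y', δ)) := by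
  obtain ⟨c, hc⟩ := ZMod.exists_two_mul_eq_of_odd hn (x' - x)
  have h' := tensorTauRhoEqv_translate_two_mul x y c ε δ
  rwa [show x + 2 * c = x' by linear_combination hc,
    show y + 2 * c = y' by linear_combination hc - h] at h'

lemma tensorTauRhoEqv_of_sub_eq_neg_sub (hn : Odd n) {x y x' y' : ZMod n} (ε δ : Bool)
    (h : y' - x' = -(y - x)) :
    (dihedral n).double.tensorTauRhoEqv doubleRho ((x, ε), (y, δ)) ((x', ε), (y', δ)) :=
  .trans _ _ _ ((dihedral n).double_tensorTauRhoEqv_swap_points x y ε δ)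
    (tensorTauRhoEqv_of_sub_eq_sub hn ε δ (by linear_combination h))

lemma tensorTauRhoEqv_of_tensorInvariant_eq (hn : Odd n)
    {p q : (ZMod n × Bool) × (ZMod n × Bool)} (h : tensorInvariant p = tensorInvariant q) :
    (dihedral n).double.tensorTauRhoEqv doubleRho p q := by
  obtain ⟨⟨x, ε⟩, ⟨y, δ⟩⟩ := p
  obtain ⟨⟨x', ε'⟩, ⟨y', δ'⟩⟩ := q
  simp only [tensorInvariant, Prod.mk.injEq, ZMod.natAbs_valMinAbs_eq_natAbs_valMinAbs] at h
  obtain ⟨hsub, hsign⟩ := h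
  have hpoints : (dihedral n).double.tensorTauRhoEqv doubleRho
      ((x, ε), (y, δ)) ((x', ε), (y', δ)) := by
    rcases hsub with hsub | hsub
    · exact tensorTauRhoEqv_of_sub_eq_sub hn ε δ hsub.symm
    · exact tensorTauRhoEqv_of_sub_eq_neg_sub hn ε δ (by linear_combination hsub)
  obtain ⟨rfl, rfl⟩ | ⟨rfl, rfl⟩ : ε' = ε ∧ δ' = δ ∨ ε' = !ε ∧ δ' = !δ := by
    revert hsign
    cases ε <;> cases δ <;> cases ε' <;> cases δ' <;> decide
  · exact hpoints
  · exact .trans _ _ _ hpoints ((dihedral n).double.tensorTauRhoEqv_rho doubleRho _)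

lemma tensorTauRhoEqv_iff (hn : Odd n) {p q : (ZMod n × Bool) × (ZMod n × Bool)} :
    (dihedral n).double.tensorTauRhoEqv doubleRho p q ↔ tensorInvariant p = tensorInvariant q :=
  ⟨tensorInvariant_eq_of_tensorTauRhoEqv, tensorTauRhoEqv_of_tensorInvariant_eq hn⟩

lemma setOf_tensorTauRhoEqv (hn : Odd n) (p : (ZMod n × Bool) × (ZMod n × Bool)) :
    {q | (dihedral n).double.tensorTauRhoEqv doubleRho p q} =
      {q | tensorInvariant q = tensorInvariant p} := by
  ext q
  exact (tensorTauRhoEqv_iff hn).trans eq_comm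

lemma tensorInvariant_eq_iff {k : ℕ} (hk : k ≤ n / 2) (b : Bool)
    (q : (ZMod n × Bool) × (ZMod n × Bool)) :
    tensorInvariant q = (k, b) ↔ q ∈ EsetD n k true (!b) ∪ EsetD n k false b := by
  obtain ⟨⟨i, ε⟩, ⟨j, δ⟩⟩ := q
  simp only [tensorInvariant, EsetD, Prod.mk.injEq, ZMod.natAbs_valMinAbs_eq_natCast_iff hk,
    sub_eq_iff_eq_add', ← sub_eq_add_neg, Set.mem_union, Set.mem_ofPred_eq]
  cases ε <;> cases δ <;> cases b <;> simp [← and_or_left]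

lemma range_tensorInvariant [NeZero n] :
    Set.range (tensorInvariant (n := n)) = Set.Iic (n / 2) ×ˢ Set.univ := by
  ext ⟨k, b⟩
  refine ⟨fun ⟨p, hp⟩ => ⟨hp ▸ ZMod.natAbs_valMinAbs_le _, trivial⟩, fun ⟨hk, _⟩ => ?_⟩
  exact ⟨((0, true), (k, !b)), by simp [tensorInvariant, ZMod.valMinAbs_natCast_of_le_half hk]⟩

lemma tensorTauRhoEqv_classes (hn : Odd n) :
    {S | ∃ p, S = {q | (dihedral n).double.tensorTauRhoEqv doubleRho p q}} =
      {S | ∃ k ≤ n / 2, ∃ b : Bool, S = EsetD n k true (!b) ∪ EsetD n k false b} := by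
  have : NeZero n := ⟨hn.pos.ne'⟩
  ext S
  simp only [Set.mem_ofPred_eq, setOf_tensorTauRhoEqv hn]
  rw [← Set.exists_range_iff (p := fun v => S = {q | tensorInvariant q = v}),
    range_tensorInvariant]
  simp only [Set.mem_prod, Set.mem_Iic, Set.mem_univ, and_true, Prod.exists]
  constructor
  · rintro ⟨k, b, hk, rfl⟩
    exact ⟨k, hk, b, Set.ext (tensorInvariant_eq_iff hk b)⟩
  · rintro ⟨k, hk, b, rfl⟩
    exact ⟨k, b, hk, (Set.ext (tensorInvariant_eq_iff hk b)).symm⟩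

lemma card_tensorTauRho (hn : Odd n) :
    Nat.card ((dihedral n).double.TensorTauRho doubleRho) = 2 * (n / 2 + 1) := by
  have : NeZero n := ⟨hn.pos.ne'⟩
  have e : (dihedral n).double.TensorTauRho doubleRho ≃ Set.range (tensorInvariant (n := n)) :=
    (Quotient.congrRight fun _ _ => (tensorTauRhoEqv_iff hn).trans Setoid.ker_def.symm).trans
      (Setoid.quotientKerEquivRange _)
  rw [Nat.card_congr e, range_tensorInvariant, Nat.card_congr (Equiv.Set.prod _ _), Nat.card_prod]
  simp [mul_comm]

end dihedral

/-- for `n = 2m+1`, the quotient `D(R_n) ⊗ D(R_n) / ⟨τ, ρ⟩` has exactly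
`2(m+1) = n+1` elements, namely `E(k)^{+,+} ∪ E(k)^{−,−}` and
`E(k)^{+,−} ∪ E(k)^{−,+}` for `k = 0, …, m`. -/
theorem statement13 (m : ℕ) :
    ({S : Set ((ZMod (2 * m + 1) × Bool) × (ZMod (2 * m + 1) × Bool)) |
        ∃ p, S = {q | ((dihedral (2 * m + 1)).double).tensorTauRhoEqv doubleRho p q}} =
      {S | ∃ k ≤ m,
        S = EsetD (2 * m + 1) k true true ∪ EsetD (2 * m + 1) k false false ∨
        S = EsetD (2 * m + 1) k true false ∪ EsetD (2 * m + 1) k false true}) ∧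
    Nat.card (((dihedral (2 * m + 1)).double).TensorTauRho doubleRho) = 2 * (m + 1) := by
  have hn : Odd (2 * m + 1) := odd_two_mul_add_one m
  have hm : (2 * m + 1) / 2 = m := by omega
  refine ⟨?_, by rw [dihedral.card_tensorTauRho hn, hm]⟩
  rw [dihedral.tensorTauRhoEqv_classes hn, hm]
  simp only [Bool.exists_bool, Bool.not_false, Bool.not_true, or_comm]
end

section
/- Let n = 2m with m ≥ 1, let R_n be the dihedral quandle of order n, and let D(R_n) be its symmetric double. Two pairs (x^ε, y^δ), (x'^{ε'}, y'^{δ'}) ∈ D(R_n) × D(R_n) are equivalent under the relation defining D(R_n) ⊗ D(R_n) if and only if ε = ε', δ = δ', d_n(x, y) = d_n(x', y'), and x − x' is even. Consequently D(R_n) ⊗ D(R_n) consists of exactly 8(m+1) = 4n+8 elements, namely the sets E(k)_0^{ε,δ} = {(i, i+k)^{ε,δ}, (i, i−k)^{ε,δ} : i ∈ R_{n,even}} and E(k)_1^{ε,δ} = {(i, i+k)^{ε,δ}, (i, i−k)^{ε,δ} : i ∈ R_{n,odd}} for k = 0, 1, …, m and ε, δ ∈ {+,−}. -/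
/-- `E(k)₀^{ε,δ} = {(i, i+k)^{ε,δ}, (i, i−k)^{ε,δ} : i ∈ R_{n,even}}`. -/
def EsetD0 (n k : ℕ) (ε δ : Bool) : Set ((ZMod n × Bool) × (ZMod n × Bool)) :=
  {p | ∃ i : ZMod n, isEvenClass n i ∧
    (p = ((i, ε), (i + (k : ZMod n), δ)) ∨ p = ((i, ε), (i - (k : ZMod n), δ)))}

/-- `E(k)₁^{ε,δ} = {(i, i+k)^{ε,δ}, (i, i−k)^{ε,δ} : i ∈ R_{n,odd}}`. -/
def EsetD1 (n k : ℕ) (ε δ : Bool) : Set ((ZMod n × Bool) × (ZMod n × Bool)) :=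
  {p | ∃ i : ZMod n, isOddClass n i ∧
    (p = ((i, ε), (i + (k : ZMod n), δ)) ∨ p = ((i, ε), (i - (k : ZMod n), δ)))}

section Helpers

open Relation

/-- distance of a class to 0 -/
def dd (n : ℕ) (c : ZMod n) : ℕ := min c.val (n - c.val)

/-- being twice something -/
def Ev (n : ℕ) (c : ZMod n) : Prop := ∃ w : ZMod n, c = 2 * w

variable {n : ℕ}

lemma natCast_val' [NeZero n] (a : ZMod n) : ((a.val : ℕ) : ZMod n) = a := by
  rw [ZMod.natCast_val, ZMod.cast_id]

lemma dd_neg [NeZero n] (c : ZMod n) : dd n (-c) = dd n c := by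
  rcases eq_or_ne c 0 with rfl | hc
  · simp
  · have h1 : (-c).val = n - c.val := by rw [ZMod.neg_val, if_neg hc]
    have h2 : c.val < n := ZMod.val_lt c
    have h3 : c.val ≠ 0 := fun h => hc ((ZMod.val_eq_zero c).mp h)
    unfold dd
    rw [h1]
    omega

lemma dd_inj [NeZero n] {c c' : ZMod n} (h : dd n c = dd n c') : c' = c ∨ c' = -c := by
  have hv : c.val < n := ZMod.val_lt c
  have hv' : c'.val < n := ZMod.val_lt c'
  unfold dd at h
  have hcase : c'.val = c.val ∨ c.val + c'.val = n := by omega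
  rcases hcase with hc | hc
  · exact Or.inl (ZMod.val_injective n hc)
  · right
    rcases eq_or_ne c 0 with rfl | h0
    · simp at hc; omega
    · apply ZMod.val_injective n
      rw [ZMod.neg_val, if_neg h0]
      omega

lemma dd_le (m : ℕ) (hm : 1 ≤ m) (c : ZMod (2*m)) : dd (2*m) c ≤ m := by
  haveI : NeZero (2*m) := ⟨by omega⟩
  have := ZMod.val_lt c
  unfold dd
  omega

lemma val_natCast_le {m k : ℕ} (hm : 1 ≤ m) (hk : k ≤ m) : ((k : ZMod (2*m))).val = k := by
  haveI : NeZero (2*m) := ⟨by omega⟩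
  exact ZMod.val_cast_of_lt (by omega)

lemma dd_natCast {m k : ℕ} (hm : 1 ≤ m) (hk : k ≤ m) : dd (2*m) (k : ZMod (2*m)) = k := by
  unfold dd
  rw [val_natCast_le hm hk]
  omega

lemma dd_eq_iff {m k : ℕ} (hm : 1 ≤ m) (hk : k ≤ m) (c : ZMod (2*m)) :
    dd (2*m) c = k ↔ c = (k : ZMod (2*m)) ∨ c = -(k : ZMod (2*m)) := by
  haveI : NeZero (2*m) := ⟨by omega⟩
  constructor
  · intro h
    have h2 : dd (2*m) ((k : ZMod (2*m))) = dd (2*m) c := (dd_natCast hm hk).trans h.symm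
    rcases dd_inj h2 with hc | hc
    · exact Or.inl hc
    · right; rw [hc]
  · rintro (rfl | rfl)
    · exact dd_natCast hm hk
    · rw [dd_neg]; exact dd_natCast hm hk

lemma even_rep [NeZero n] {x : ZMod n} (h : Even x.val) : Ev n x := by
  obtain ⟨j, hj⟩ := h
  exact ⟨(j : ZMod n), by rw [← natCast_val' x, hj]; push_cast; ring⟩

lemma odd_rep [NeZero n] {x : ZMod n} (h : ¬ Even x.val) : ∃ w : ZMod n, x = 2*w + 1 := by
  rw [Nat.not_even_iff_odd] at h
  obtain ⟨j, hj⟩ := h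
  exact ⟨(j : ZMod n), by rw [← natCast_val' x, hj]; push_cast; ring⟩

lemma ev_even {m : ℕ} (hm : 1 ≤ m) {x : ZMod (2*m)} (h : Ev (2*m) x) : Even x.val := by
  haveI : NeZero (2*m) := ⟨by omega⟩
  obtain ⟨w, hw⟩ := h
  have h1 : (((x.val : ℤ) - 2 * w.val : ℤ) : ZMod (2*m)) = 0 := by
    push_cast [natCast_val']
    rw [hw]
    ring
  rw [ZMod.intCast_zmod_eq_zero_iff_dvd] at h1
  have h2 : (2:ℤ) ∣ ((x.val : ℤ) - 2 * w.val) := dvd_trans ⟨(m:ℤ), by push_cast; ring⟩ h1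
  obtain ⟨t, ht⟩ := h2
  rw [Nat.even_iff]
  omega

lemma ev_sub_iff {m : ℕ} (hm : 1 ≤ m) (a b : ZMod (2*m)) :
    Ev (2*m) (a - b) ↔ (Even a.val ↔ Even b.val) := by
  haveI : NeZero (2*m) := ⟨by omega⟩
  constructor
  · intro h
    obtain ⟨w, hw⟩ := h
    constructor
    · intro ha
      obtain ⟨w1, h1⟩ := even_rep ha
      refine ev_even hm ⟨w1 - w, ?_⟩
      linear_combination h1 - hw
    · intro hb
      obtain ⟨w2, h2⟩ := even_rep hb
      refine ev_even hm ⟨w2 + w, ?_⟩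
      linear_combination h2 + hw
  · intro hiff
    by_cases ha : Even a.val
    · obtain ⟨w1, h1⟩ := even_rep ha
      obtain ⟨w2, h2⟩ := even_rep (hiff.mp ha)
      exact ⟨w1 - w2, by linear_combination h1 - h2⟩
    · have hb : ¬ Even b.val := fun h => ha (hiff.mpr h)
      obtain ⟨w1, h1⟩ := odd_rep ha
      obtain ⟨w2, h2⟩ := odd_rep hb
      exact ⟨w1 - w2, by linear_combination h1 - h2⟩

lemma isEvenClass_iff_Ev [NeZero n] (x : ZMod n) : isEvenClass n x ↔ Ev n x := by
  constructor
  · rintro ⟨a, ⟨b, hb⟩, ha⟩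
    exact ⟨(b : ZMod n), by rw [← ha, hb]; push_cast; ring⟩
  · rintro ⟨w, hw⟩
    refine ⟨2 * (w.val : ℤ), ⟨(w.val : ℤ), by ring⟩, ?_⟩
    push_cast [natCast_val']
    exact hw.symm

lemma isEvenClass_iff {m : ℕ} (hm : 1 ≤ m) (x : ZMod (2*m)) :
    isEvenClass (2*m) x ↔ Even x.val := by
  haveI : NeZero (2*m) := ⟨by omega⟩
  rw [isEvenClass_iff_Ev]
  exact ⟨ev_even hm, even_rep⟩

lemma isOddClass_iff {m : ℕ} (hm : 1 ≤ m) (x : ZMod (2*m)) :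
    isOddClass (2*m) x ↔ ¬ Even x.val := by
  haveI : NeZero (2*m) := ⟨by omega⟩
  constructor
  · rintro ⟨a, ⟨j, hj⟩, ha⟩
    have h1 : ((a - (x.val : ℤ) : ℤ) : ZMod (2*m)) = 0 := by
      push_cast [natCast_val']
      rw [ha]
      ring
    rw [ZMod.intCast_zmod_eq_zero_iff_dvd] at h1
    have h2 : (2:ℤ) ∣ (a - (x.val : ℤ)) := dvd_trans ⟨(m:ℤ), by push_cast; ring⟩ h1
    obtain ⟨t, ht⟩ := h2
    rw [Nat.even_iff]
    omega
  · intro h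
    obtain ⟨j, hj⟩ := Nat.not_even_iff_odd.mp h
    refine ⟨(x.val : ℤ), ⟨(j : ℤ), by omega⟩, ?_⟩
    push_cast [natCast_val']
    rfl

lemma ddist_eq [NeZero n] (x y : ZMod n) : ddist n x y = dd n (x - y) := by
  have hvlt : (x - y).val < n := ZMod.val_lt _
  have hmem : dd n (x - y) ∈
      {d : ℕ | ∃ a b : ℤ, (a : ZMod n) = x ∧ (b : ZMod n) = y ∧ (a - b).natAbs = d} := by
    rcases le_or_gt ((x - y).val) (n - (x - y).val) with h | h
    · refine ⟨(y.val : ℤ) + ((x - y).val : ℤ), (y.val : ℤ), ?_, ?_, ?_⟩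
      · push_cast [natCast_val']; ring
      · push_cast [natCast_val']; rfl
      · show ((y.val : ℤ) + ((x - y).val : ℤ) - (y.val : ℤ)).natAbs = dd n (x - y)
        unfold dd
        omega
    · refine ⟨(y.val : ℤ) + ((x - y).val : ℤ) - n, (y.val : ℤ), ?_, ?_, ?_⟩
      · push_cast [natCast_val', ZMod.natCast_self]; ring
      · push_cast [natCast_val']; rfl
      · show ((y.val : ℤ) + ((x - y).val : ℤ) - n - (y.val : ℤ)).natAbs = dd n (x - y)
        unfold dd
        omega
  have hlb : ∀ d ∈ {d : ℕ | ∃ a b : ℤ, (a : ZMod n) = x ∧ (b : ZMod n) = y ∧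
      (a - b).natAbs = d}, dd n (x - y) ≤ d := by
    rintro d ⟨a, b, ha, hb, rfl⟩
    have h1 : ((a - b - ((x - y).val : ℤ) : ℤ) : ZMod n) = 0 := by
      push_cast [natCast_val', ha, hb]
      ring
    rw [ZMod.intCast_zmod_eq_zero_iff_dvd] at h1
    obtain ⟨t, ht⟩ := h1
    have hbound : a - b - ((x - y).val : ℤ) = 0 ∨
        a - b - ((x - y).val : ℤ) ≤ -(n:ℤ) ∨ (n:ℤ) ≤ a - b - ((x - y).val : ℤ) := by
      rcases lt_trichotomy t 0 with h | rfl | h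
      · right; left
        rw [ht]
        have h2 : t ≤ -1 := by omega
        have := mul_le_mul_of_nonneg_left h2 (show (0:ℤ) ≤ (n:ℤ) by positivity)
        linarith
      · left; rw [ht]; ring
      · right; right
        rw [ht]
        have h2 : (1:ℤ) ≤ t := by omega
        have := mul_le_mul_of_nonneg_left h2 (show (0:ℤ) ≤ (n:ℤ) by positivity)
        linarith
    unfold dd
    omega
  exact le_antisymm (Nat.sInf_le hmem) (hlb _ (Nat.sInf_mem ⟨_, hmem⟩))

end Helpers
section Core

open Relation

variable {n : ℕ}

lemma step_iff (p q : (ZMod n × Bool) × (ZMod n × Bool)) :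
    (dihedral n).double.tensorStep p q ↔ ∃ z : ZMod n,
      q = ((2*z - p.1.1, p.1.2), (2*z - p.2.1, p.2.2)) := by
  constructor
  · rintro ⟨⟨z, γ⟩, rfl⟩
    refine ⟨z, ?_⟩
    cases γ <;> simp [QuandleStr.double, QuandleStr.tensorStep, dihedral]
  · rintro ⟨z, rfl⟩
    refine ⟨(z, true), ?_⟩
    simp [QuandleStr.double, QuandleStr.tensorStep, dihedral]

lemma eqv_invariant (m : ℕ) (hm : 1 ≤ m)
    {p q : (ZMod (2*m) × Bool) × (ZMod (2*m) × Bool)}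
    (h : (dihedral (2*m)).double.tensorEqv p q) :
    p.1.2 = q.1.2 ∧ p.2.2 = q.2.2 ∧
      dd (2*m) (p.1.1 - p.2.1) = dd (2*m) (q.1.1 - q.2.1) ∧
      Ev (2*m) (p.1.1 - q.1.1) := by
  haveI : NeZero (2*m) := ⟨by omega⟩
  induction h with
  | rel a b hab =>
      obtain ⟨z, rfl⟩ := (step_iff _ _).mp hab
      refine ⟨rfl, rfl, ?_, ⟨a.1.1 - z, by ring⟩⟩
      have h1 : (2*z - a.1.1) - (2*z - a.2.1) = -(a.1.1 - a.2.1) := by ring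
      show dd (2*m) (a.1.1 - a.2.1) = dd (2*m) ((2*z - a.1.1) - (2*z - a.2.1))
      rw [h1, dd_neg]
  | refl a => exact ⟨rfl, rfl, rfl, 0, by ring⟩
  | symm a b h ih =>
      obtain ⟨h1, h2, h3, w, hw⟩ := ih
      exact ⟨h1.symm, h2.symm, h3.symm, -w, by linear_combination -hw⟩
  | trans a b c h1 h2 ih1 ih2 =>
      obtain ⟨h1a, h2a, h3a, w1, hw1⟩ := ih1
      obtain ⟨h1b, h2b, h3b, w2, hw2⟩ := ih2
      exact ⟨h1a.trans h1b, h2a.trans h2b, h3a.trans h3b, w1 + w2,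
        by linear_combination hw1 + hw2⟩

lemma eqv_iff (m : ℕ) (hm : 1 ≤ m) (x y x' y' : ZMod (2*m)) (ε δ ε' δ' : Bool) :
    (dihedral (2*m)).double.tensorEqv ((x, ε), (y, δ)) ((x', ε'), (y', δ')) ↔
      ε = ε' ∧ δ = δ' ∧ dd (2*m) (x - y) = dd (2*m) (x' - y') ∧ Ev (2*m) (x - x') := by
  haveI : NeZero (2*m) := ⟨by omega⟩
  constructor
  · intro h
    exact eqv_invariant m hm h
  · rintro ⟨rfl, rfl, hd, w, hw⟩
    rcases dd_inj hd with hc | hc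
    · -- x' - y' = x - y : two steps
      apply Relation.EqvGen.trans _ ((2*0 - x, ε), (2*0 - y, δ)) _
        (Relation.EqvGen.rel _ _ ((step_iff _ _).mpr ⟨0, rfl⟩))
      apply Relation.EqvGen.rel
      apply (step_iff _ _).mpr
      refine ⟨-w, ?_⟩
      simp only [Prod.mk.injEq]
      refine ⟨⟨?_, trivial⟩, ?_, trivial⟩
      · linear_combination -hw
      · linear_combination -hc - hw
    · -- x' - y' = -(x - y) : one step
      apply Relation.EqvGen.rel
      apply (step_iff _ _).mpr
      refine ⟨x - w, ?_⟩
      simp only [Prod.mk.injEq]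
      refine ⟨⟨?_, trivial⟩, ?_, trivial⟩
      · linear_combination -hw
      · linear_combination -hc - hw

end Core
section Classes

lemma class_even (m : ℕ) (hm : 1 ≤ m) (x y : ZMod (2*m)) (ε δ : Bool)
    (hx : Even x.val) :
    {q | (dihedral (2*m)).double.tensorEqv ((x, ε), (y, δ)) q} =
      EsetD0 (2*m) (dd (2*m) (x - y)) ε δ := by
  haveI : NeZero (2*m) := ⟨by omega⟩
  have hkle : dd (2*m) (x - y) ≤ m := dd_le m hm _
  ext ⟨⟨x', ε'⟩, y', δ'⟩
  simp only [Set.mem_setOf_eq, EsetD0]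
  rw [eqv_iff m hm]
  constructor
  · rintro ⟨rfl, rfl, hd, hev⟩
    refine ⟨x', (isEvenClass_iff hm x').mpr (((ev_sub_iff hm x x').mp hev).mp hx), ?_⟩
    rcases (dd_eq_iff hm hkle _).mp hd.symm with hc | hc
    · right
      have hy' : y' = x' - (dd (2*m) (x - y) : ZMod (2*m)) := by linear_combination -hc
      rw [hy']
    · left
      have hy' : y' = x' + (dd (2*m) (x - y) : ZMod (2*m)) := by linear_combination -hc
      rw [hy']
  · rintro ⟨i, hi, h | h⟩ <;>
      simp only [Prod.mk.injEq] at h <;>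
      obtain ⟨⟨rfl, rfl⟩, rfl, rfl⟩ := h <;>
      refine ⟨rfl, rfl, ?_, (ev_sub_iff hm x x').mpr
        (iff_of_true hx ((isEvenClass_iff hm x').mp hi))⟩
    · have h1 : x' - (x' + (dd (2*m) (x - y) : ZMod (2*m))) =
          -(dd (2*m) (x - y) : ZMod (2*m)) := by ring
      rw [h1, dd_neg, dd_natCast hm hkle]
    · have h1 : x' - (x' - (dd (2*m) (x - y) : ZMod (2*m))) =
          (dd (2*m) (x - y) : ZMod (2*m)) := by ring
      rw [h1, dd_natCast hm hkle]

lemma class_odd (m : ℕ) (hm : 1 ≤ m) (x y : ZMod (2*m)) (ε δ : Bool)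
    (hx : ¬ Even x.val) :
    {q | (dihedral (2*m)).double.tensorEqv ((x, ε), (y, δ)) q} =
      EsetD1 (2*m) (dd (2*m) (x - y)) ε δ := by
  haveI : NeZero (2*m) := ⟨by omega⟩
  have hkle : dd (2*m) (x - y) ≤ m := dd_le m hm _
  ext ⟨⟨x', ε'⟩, y', δ'⟩
  simp only [Set.mem_setOf_eq, EsetD1]
  rw [eqv_iff m hm]
  constructor
  · rintro ⟨rfl, rfl, hd, hev⟩
    have hx' : ¬ Even x'.val := fun h => hx (((ev_sub_iff hm x x').mp hev).mpr h)
    refine ⟨x', (isOddClass_iff hm x').mpr hx', ?_⟩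
    rcases (dd_eq_iff hm hkle _).mp hd.symm with hc | hc
    · right
      have hy' : y' = x' - (dd (2*m) (x - y) : ZMod (2*m)) := by linear_combination -hc
      rw [hy']
    · left
      have hy' : y' = x' + (dd (2*m) (x - y) : ZMod (2*m)) := by linear_combination -hc
      rw [hy']
  · rintro ⟨i, hi, h | h⟩ <;>
      simp only [Prod.mk.injEq] at h <;>
      obtain ⟨⟨rfl, rfl⟩, rfl, rfl⟩ := h <;>
      refine ⟨rfl, rfl, ?_, (ev_sub_iff hm x x').mpr
        (iff_of_false hx ((isOddClass_iff hm x').mp hi))⟩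
    · have h1 : x' - (x' + (dd (2*m) (x - y) : ZMod (2*m))) =
          -(dd (2*m) (x - y) : ZMod (2*m)) := by ring
      rw [h1, dd_neg, dd_natCast hm hkle]
    · have h1 : x' - (x' - (dd (2*m) (x - y) : ZMod (2*m))) =
          (dd (2*m) (x - y) : ZMod (2*m)) := by ring
      rw [h1, dd_natCast hm hkle]

end Classes
section Count

noncomputable def Fmap (m : ℕ) (hm : 1 ≤ m) :
    ((ZMod (2*m) × Bool) × (ZMod (2*m) × Bool)) → Bool × Bool × Fin (m+1) × Bool :=
  fun p => (p.1.2, p.2.2, ⟨dd (2*m) (p.1.1 - p.2.1), Nat.lt_succ_of_le (dd_le m hm _)⟩,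
    decide (Even p.1.1.val))

lemma card_tensor (m : ℕ) (hm : 1 ≤ m) :
    Nat.card (((dihedral (2*m)).double).Tensor) = 8 * (m + 1) := by
  haveI : NeZero (2*m) := ⟨by omega⟩
  have hsound : ∀ a b : (ZMod (2*m) × Bool) × (ZMod (2*m) × Bool),
      (dihedral (2*m)).double.tensorEqv a b → Fmap m hm a = Fmap m hm b := by
    intro a b h
    obtain ⟨h1, h2, h3, hev⟩ := eqv_invariant m hm h
    unfold Fmap
    rw [h1, h2]
    congr 1
    congr 1
    congr 1
    · exact Fin.ext h3
    · rw [decide_eq_decide]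
      exact (ev_sub_iff hm _ _).mp hev
  let G : ((dihedral (2*m)).double).Tensor → Bool × Bool × Fin (m+1) × Bool :=
    Quotient.lift (Fmap m hm) hsound
  have hbij : Function.Bijective G := by
    constructor
    · intro a b
      induction a using Quotient.ind with | _ a =>
      induction b using Quotient.ind with | _ b =>
      intro h
      obtain ⟨⟨x, ε⟩, y, δ⟩ := a
      obtain ⟨⟨x', ε'⟩, y', δ'⟩ := b
      have h' : Fmap m hm ((x, ε), (y, δ)) = Fmap m hm ((x', ε'), (y', δ')) := h
      unfold Fmap at h'
      simp only [Prod.mk.injEq, Fin.mk.injEq, decide_eq_decide] at h'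
      obtain ⟨he, hd, hfin, hpar⟩ := h'
      apply Quotient.sound
      exact (eqv_iff m hm x y x' y' ε δ ε' δ').mpr
        ⟨he, hd, hfin, (ev_sub_iff hm x x').mpr hpar⟩
    · rintro ⟨ε, δ, ⟨k, hk⟩, b⟩
      have hkm : k ≤ m := by omega
      cases b
      · refine ⟨Quotient.mk _ ((1, ε), (1 + (k : ZMod (2*m)), δ)), ?_⟩
        have hone : (1 : ZMod (2*m)).val = 1 := by
          rw [ZMod.val_one_eq_one_mod]; exact Nat.mod_eq_of_lt (by omega)
        show Fmap m hm _ = _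
        unfold Fmap
        simp only [Prod.mk.injEq, Fin.mk.injEq]
        refine ⟨trivial, trivial, ?_, ?_⟩
        · rw [show (1 : ZMod (2*m)) - (1 + (k : ZMod (2*m))) = -(k : ZMod (2*m)) by ring,
            dd_neg, dd_natCast hm hkm]
        · rw [hone]
          simp
      · refine ⟨Quotient.mk _ ((0, ε), ((k : ZMod (2*m)), δ)), ?_⟩
        show Fmap m hm _ = _
        unfold Fmap
        simp only [Prod.mk.injEq, Fin.mk.injEq]
        refine ⟨trivial, trivial, ?_, ?_⟩
        · rw [show (0 : ZMod (2*m)) - (k : ZMod (2*m)) = -(k : ZMod (2*m)) by ring,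
            dd_neg, dd_natCast hm hkm]
        · rw [ZMod.val_zero]
          simp
  rw [Nat.card_eq_of_bijective G hbij]
  simp only [Nat.card_eq_fintype_card, Fintype.card_prod, Fintype.card_bool, Fintype.card_fin]
  ring

end Count
/-- for `n = 2m` with `m ≥ 1`, two pairs `((x, ε), (y, δ))`,
`((x', ε'), (y', δ'))` are equivalent in `D(R_n) × D(R_n)` iff `ε = ε'`, `δ = δ'`,
`d_n(x, y) = d_n(x', y')` and `x − x'` is even; consequently `D(R_n) ⊗ D(R_n)`
consists of exactly `8(m+1) = 4n+8` elements, the sets `E(k)₀^{ε,δ}` and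
`E(k)₁^{ε,δ}` for `k = 0, …, m` and `ε, δ`. -/
theorem statement14 (m : ℕ) (hm : 1 ≤ m) :
    (∀ (x y x' y' : ZMod (2 * m)) (ε δ ε' δ' : Bool),
      ((dihedral (2 * m)).double).tensorEqv ((x, ε), (y, δ)) ((x', ε'), (y', δ')) ↔
        ε = ε' ∧ δ = δ' ∧ ddist (2 * m) x y = ddist (2 * m) x' y' ∧
          isEvenClass (2 * m) (x - x')) ∧
    ({S : Set ((ZMod (2 * m) × Bool) × (ZMod (2 * m) × Bool)) |
        ∃ p, S = {q | ((dihedral (2 * m)).double).tensorEqv p q}} =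
      {S | ∃ k ≤ m, ∃ ε δ : Bool,
        S = EsetD0 (2 * m) k ε δ ∨ S = EsetD1 (2 * m) k ε δ}) ∧
    Nat.card (((dihedral (2 * m)).double).Tensor) = 8 * (m + 1) := by
  haveI : NeZero (2*m) := ⟨by omega⟩
  refine ⟨?_, ?_, card_tensor m hm⟩
  · intro x y x' y' ε δ ε' δ'
    rw [eqv_iff m hm, ddist_eq, ddist_eq, isEvenClass_iff_Ev]
  · ext S
    simp only [Set.mem_setOf_eq]
    constructor
    · rintro ⟨⟨⟨x, ε⟩, y, δ⟩, rfl⟩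
      by_cases hx : Even x.val
      · exact ⟨dd (2*m) (x - y), dd_le m hm _, ε, δ, Or.inl (class_even m hm x y ε δ hx)⟩
      · exact ⟨dd (2*m) (x - y), dd_le m hm _, ε, δ, Or.inr (class_odd m hm x y ε δ hx)⟩
    · rintro ⟨k, hk, ε, δ, h | h⟩
      · refine ⟨((0, ε), ((k : ZMod (2*m)), δ)), ?_⟩
        have hc := class_even m hm 0 (k : ZMod (2*m)) ε δ (by rw [ZMod.val_zero]; exact Even.zero)
        rw [show (0 : ZMod (2*m)) - (k : ZMod (2*m)) = -(k : ZMod (2*m)) by ring,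
          dd_neg, dd_natCast hm hk] at hc
        exact h.trans hc.symm
      · refine ⟨((1, ε), (1 + (k : ZMod (2*m)), δ)), ?_⟩
        have hone : (1 : ZMod (2*m)).val = 1 := by
          rw [ZMod.val_one_eq_one_mod]; exact Nat.mod_eq_of_lt (by omega)
        have hc := class_odd m hm 1 (1 + (k : ZMod (2*m))) ε δ (by rw [hone]; simp)
        rw [show (1 : ZMod (2*m)) - (1 + (k : ZMod (2*m))) = -(k : ZMod (2*m)) by ring,
          dd_neg, dd_natCast hm hk] at hc
        exact h.trans hc.symm
end

section
/- Let n = 2m with m ≥ 1, let R_n be the dihedral quandle of order n, and let D(R_n) be its symmetric double. The quotient set D(R_n) ⊗ D(R_n) / ⟨τ⟩ has exactly 5(m+1) elements if m is odd, and exactly 5m+6 elements if m is even; its elements are, for each even k with 0 ≤ k ≤ m: {E(k)_0^{+,+}}, {E(k)_0^{−,−}}, {E(k)_0^{+,−}, E(k)_0^{−,+}}, {E(k)_1^{+,+}}, {E(k)_1^{−,−}}, {E(k)_1^{+,−}, E(k)_1^{−,+}}, and for each odd k with 0 ≤ k ≤ m: {E(k)_0^{+,+}, E(k)_1^{+,+}},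 {E(k)_0^{−,−}, E(k)_1^{−,−}}, {E(k)_0^{+,−}, E(k)_1^{−,+}}, {E(k)_1^{+,−}, E(k)_0^{−,+}}. -/
/-!
In `D(R_{2m})` both operations `∗` and `∗̄` act by `x^ε ↦ (2z − x)^ε`, so a generator of `≈`
reflects both coordinates of a pair in a common point: it negates the difference `x₂ − x₁` and
keeps the parity of `x₁` and both signs. Conversely, pairs agreeing in this data (difference up
to sign) are related by one or two reflections, since a residue of even parity is a double.
The swap `τ` negates the difference and acts on the label `(x₁ mod 2, ε, δ)` of `(x₁^ε, x₂^δ)`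
by `(j, ε, δ) ↦ (j + x₂ − x₁ mod 2, δ, ε)`. So the classes are indexed by `k = |x₂ − x₁| ∈ [0, m]` and an
orbit of this involution on the eight labels: six orbits for even `k`, four for odd `k`.
-/

namespace QuandleStr

variable {X : Type} (Q : QuandleStr X)

lemma double_op_of_inv_eq_op (h : Q.inv = Q.op) (a b : X × Bool) :
    Q.double.op a b = (Q.op a.1 b.1, a.2) := by
  obtain ⟨y, _ | _⟩ := b <;> simp [double, h]

lemma eq_of_tensorTauEqv {β : Type} (f : X × X → β)
    (hop : ∀ p z, f (Q.op p.1 z, Q.op p.2 z) = f p) (hswap : ∀ p, f p.swap = f p)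
    {p q : X × X} (h : Q.tensorTauEqv p q) : f p = f q :=
  Setoid.eqvGen_le (r := fun p q => Q.tensorStep p q ∨ q = p.swap) (s := Setoid.ker f)
    (by rintro p _ (⟨z, rfl⟩ | rfl); exacts [(hop p z).symm, (hswap p).symm]) h

end QuandleStr

lemma dihedral_double_op (n : ℕ) (a b : ZMod n × Bool) :
    (dihedral n).double.op a b = (2 * b.1 - a.1, a.2) :=
  (dihedral n).double_op_of_inv_eq_op rfl a b

namespace DihedralDouble

abbrev Pair (m : ℕ) := (ZMod (2 * m) × Bool) × (ZMod (2 * m) × Bool)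

abbrev Label := ZMod 2 × Bool × Bool

def parity (m : ℕ) : ZMod (2 * m) →+* ZMod 2 := ZMod.castHom (dvd_mul_right 2 m) (ZMod 2)

variable {m : ℕ}

def diff (p : Pair m) : ZMod (2 * m) := p.2.1 - p.1.1

def label (p : Pair m) : Label := (parity m p.1.1, p.1.2, p.2.2)

def swapLabel (c : ZMod 2) (t : Label) : Label := (t.1 + c, t.2.2, t.2.1)

def labelSet (m : ℕ) (d : ZMod (2 * m)) (t : Label) : Set (Pair m) :=
  {q | (diff q = d ∨ diff q = -d) ∧ label q = t}

def tauClass (m : ℕ) (d : ZMod (2 * m)) (t : Label) : Set (Pair m) :=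
  labelSet m d t ∪ labelSet m d (swapLabel (parity m d) t)

lemma parity_intCast (a : ℤ) : parity m a = a := map_intCast _ a

lemma parity_natCast (k : ℕ) : parity m k = k := map_natCast _ k

lemma parity_neg (x : ZMod (2 * m)) : parity m (-x) = parity m x := by
  rw [map_neg, ZMod.neg_eq_self_mod_two]

lemma parity_two_mul_sub (z x : ZMod (2 * m)) : parity m (2 * z - x) = parity m x := by
  rw [map_sub, map_mul, map_ofNat, show (2 : ZMod 2) = 0 from rfl, zero_mul, zero_sub,
    ZMod.neg_eq_self_mod_two]

lemma exists_eq_two_mul_of_parity_eq_zero {a : ZMod (2 * m)} (h : parity m a = 0) :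
    ∃ t, a = 2 * t := by
  obtain ⟨a, rfl⟩ := ZMod.intCast_surjective a
  rw [parity_intCast, ZMod.intCast_eq_zero_iff_even] at h
  obtain ⟨t, rfl⟩ := h
  exact ⟨t, by push_cast; ring⟩

lemma isEvenClass_iff (x : ZMod (2 * m)) : isEvenClass (2 * m) x ↔ parity m x = 0 := by
  obtain ⟨a, rfl⟩ := ZMod.intCast_surjective x
  refine ⟨?_, fun h => ⟨a, ?_, rfl⟩⟩
  · rintro ⟨b, hb, hba⟩
    rw [← hba, parity_intCast, ZMod.intCast_eq_zero_iff_even]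
    exact hb
  · rwa [parity_intCast, ZMod.intCast_eq_zero_iff_even] at h

lemma isOddClass_iff (x : ZMod (2 * m)) : isOddClass (2 * m) x ↔ parity m x = 1 := by
  obtain ⟨a, rfl⟩ := ZMod.intCast_surjective x
  refine ⟨?_, fun h => ⟨a, ?_, rfl⟩⟩
  · rintro ⟨b, hb, hba⟩
    rw [← hba, parity_intCast, ZMod.intCast_eq_one_iff_odd]
    exact hb
  · rwa [parity_intCast, ZMod.intCast_eq_one_iff_odd] at h

def reflect (z : ZMod (2 * m)) (p : Pair m) : Pair m :=
  ((2 * z - p.1.1, p.1.2), (2 * z - p.2.1, p.2.2))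

section Moves

variable (z : ZMod (2 * m)) (p : Pair m)

lemma tensorStep_reflect : (dihedral (2 * m)).double.tensorStep p (reflect z p) :=
  ⟨(z, true), by simp [dihedral_double_op, reflect]⟩

lemma diff_reflect : diff (reflect z p) = -diff p := by
  simp only [diff, reflect]; ring

lemma label_reflect : label (reflect z p) = label p := by
  simp [label, reflect, parity_two_mul_sub]

lemma diff_swap : diff p.swap = -diff p := by
  simp only [diff, Prod.fst_swap, Prod.snd_swap]; ring

lemma label_swap : label p.swap = swapLabel (parity m (diff p)) (label p) := by
  simp only [label, swapLabel, diff, Prod.fst_swap, Prod.snd_swap, map_sub, Prod.mk.injEq,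
    and_true]
  ring

end Moves

lemma swapLabel_swapLabel (c : ZMod 2) (t : Label) : swapLabel c (swapLabel c t) = t := by
  revert c t; decide

lemma labelSet_neg (d : ZMod (2 * m)) (t : Label) : labelSet m (-d) t = labelSet m d t := by
  ext q; simp only [labelSet, Set.mem_ofPred_eq, neg_neg, or_comm]

lemma tauClass_neg (d : ZMod (2 * m)) (t : Label) : tauClass m (-d) t = tauClass m d t := by
  rw [tauClass, tauClass, labelSet_neg, labelSet_neg, parity_neg]

lemma tauClass_swapLabel (d : ZMod (2 * m)) (t : Label) :
    tauClass m d (swapLabel (parity m d) t) = tauClass m d t := by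
  rw [tauClass, tauClass, swapLabel_swapLabel, Set.union_comm]

lemma mem_tauClass_self (p : Pair m) : p ∈ tauClass m (diff p) (label p) :=
  Or.inl ⟨Or.inl rfl, rfl⟩

lemma tauClass_eq_of_tensorTauEqv {p q : Pair m}
    (h : (dihedral (2 * m)).double.tensorTauEqv p q) :
    tauClass m (diff p) (label p) = tauClass m (diff q) (label q) := by
  refine (dihedral (2 * m)).double.eq_of_tensorTauEqv (fun p => tauClass m (diff p) (label p))
    (fun p z => ?_) (fun p => ?_) h
  · have hp : ((dihedral (2 * m)).double.op p.1 z, (dihedral (2 * m)).double.op p.2 z) =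
        reflect z.1 p := by simp [dihedral_double_op, reflect]
    rw [hp, diff_reflect, label_reflect, tauClass_neg]
  · rw [diff_swap, label_swap, tauClass_neg, tauClass_swapLabel]

lemma tensorTauEqv_of_diff_eq_neg {p q : Pair m} (hd : diff q = -diff p) (hl : label q = label p) :
    (dihedral (2 * m)).double.tensorTauEqv p q := by
  obtain ⟨⟨p₁, ε⟩, ⟨p₂, δ⟩⟩ := p
  obtain ⟨⟨q₁, ε'⟩, ⟨q₂, δ'⟩⟩ := q
  simp only [label, Prod.mk.injEq] at hl
  obtain ⟨hpar, rfl, rfl⟩ := hl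
  simp only [diff] at hd
  obtain ⟨z, hz⟩ : ∃ z, q₁ + p₁ = 2 * z := exists_eq_two_mul_of_parity_eq_zero (by
    rw [map_add, hpar, CharTwo.add_self_eq_zero])
  have hq : ((q₁, ε'), (q₂, δ')) = reflect z ((p₁, ε'), (p₂, δ')) := by
    simp only [reflect, Prod.mk.injEq, and_true]
    exact ⟨by linear_combination hz, by linear_combination hz + hd⟩
  exact hq ▸ Relation.EqvGen.rel _ _ (Or.inl (tensorStep_reflect z _))

lemma tensorTauEqv_of_mem_labelSet {p q : Pair m} (h : q ∈ labelSet m (diff p) (label p)) :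
    (dihedral (2 * m)).double.tensorTauEqv p q := by
  obtain ⟨hd | hd, hl⟩ := h
  · have hp : (dihedral (2 * m)).double.tensorTauEqv p (reflect 0 p) :=
      Relation.EqvGen.rel _ _ (Or.inl (tensorStep_reflect 0 p))
    refine Relation.EqvGen.trans _ _ _ hp (tensorTauEqv_of_diff_eq_neg ?_ ?_)
    · rw [diff_reflect, neg_neg, hd]
    · rw [label_reflect, hl]
  · exact tensorTauEqv_of_diff_eq_neg hd hl

theorem tensorTauEqv_iff_mem_tauClass (p q : Pair m) :
    (dihedral (2 * m)).double.tensorTauEqv p q ↔ q ∈ tauClass m (diff p) (label p) := by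
  refine ⟨fun h => tauClass_eq_of_tensorTauEqv h ▸ mem_tauClass_self q, ?_⟩
  rintro (h | h)
  · exact tensorTauEqv_of_mem_labelSet h
  · have hswap : (dihedral (2 * m)).double.tensorTauEqv p p.swap :=
      Relation.EqvGen.rel _ _ (Or.inr rfl)
    refine Relation.EqvGen.trans p p.swap q hswap (tensorTauEqv_of_mem_labelSet ?_)
    rwa [diff_swap, labelSet_neg, label_swap]

lemma exists_diff_label (d : ZMod (2 * m)) (t : Label) :
    ∃ p : Pair m, diff p = d ∧ label p = t := by
  refine ⟨((t.1.val, t.2.1), (t.1.val + d, t.2.2)), by simp [diff], ?_⟩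
  simp [label]

lemma exists_le_eq_or_eq_neg [NeZero m] (d : ZMod (2 * m)) :
    ∃ k ≤ m, d = k ∨ d = -k := by
  have : NeZero (2 * m) := ⟨by simp [NeZero.ne m]⟩
  refine ⟨d.valMinAbs.natAbs, by simpa using d.natAbs_valMinAbs_le, ?_⟩
  rw [ZMod.natCast_natAbs_valMinAbs]
  split_ifs <;> simp

lemma natCast_eq_or_eq_neg_iff {k k' : ℕ} (hk : k ≤ m) (hk' : k' ≤ m) :
    ((k : ZMod (2 * m)) = k' ∨ (k : ZMod (2 * m)) = -k') ↔ k = k' := by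
  rw [← ZMod.natAbs_valMinAbs_eq_natAbs_valMinAbs, ZMod.valMinAbs_natCast_of_le_half,
    ZMod.valMinAbs_natCast_of_le_half] <;> simp <;> omega

/-- One label from each orbit of `swapLabel c`, chosen so that `tauClass` unfolds to the sets
listed in the theorem. -/
def labelReps (c : ZMod 2) : Finset Label :=
  if c = 0 then
    {(0, true, true), (0, false, false), (0, true, false),
      (1, true, true), (1, false, false), (1, true, false)}
  else {(0, true, true), (0, false, false), (0, true, false), (1, true, false)}

lemma exists_mem_labelReps (c : ZMod 2) (t : Label) :
    ∃ s ∈ labelReps c, s = t ∨ s = swapLabel c t := by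
  revert c t; decide

lemma eq_of_mem_labelReps {c : ZMod 2} {s s' : Label} (hs : s ∈ labelReps c)
    (hs' : s' ∈ labelReps c) (h : s = s' ∨ s = swapLabel c s') : s = s' := by
  revert c s s'; decide

lemma card_labelReps_natCast (k : ℕ) : (labelReps (k : ZMod 2)).card = if Even k then 6 else 4 := by
  rcases Nat.even_or_odd k with hk | hk
  · rw [ZMod.natCast_eq_zero_iff_even.mpr hk, if_pos hk]; rfl
  · rw [ZMod.natCast_eq_one_iff_odd.mpr hk, if_neg (Nat.not_even_iff_odd.mpr hk)]; rfl

lemma sum_card_labelReps (m : ℕ) :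
    ∑ k ∈ Finset.range (m + 1), (labelReps (k : ZMod 2)).card =
      if Odd m then 5 * (m + 1) else 5 * m + 6 := by
  induction m with
  | zero => rfl
  | succ m ih =>
    rw [Finset.sum_range_succ, ih, card_labelReps_natCast]
    rcases Nat.even_or_odd m with hm | hm
    · simp [hm, Nat.even_add_one, ← Nat.not_even_iff_odd]
      omega
    · simp [hm, ← Nat.not_even_iff_odd]

lemma setOf_tensorTauEqv (p : Pair m) :
    {q | (dihedral (2 * m)).double.tensorTauEqv p q} = tauClass m (diff p) (label p) :=
  Set.ext (tensorTauEqv_iff_mem_tauClass p)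

theorem setOf_tensorTauEqv_classes_eq [NeZero m] :
    {S : Set (Pair m) | ∃ p, S = {q | (dihedral (2 * m)).double.tensorTauEqv p q}} =
      {S | ∃ k ≤ m, ∃ t ∈ labelReps (k : ZMod 2), S = tauClass m k t} := by
  ext S
  constructor
  · rintro ⟨p, rfl⟩
    obtain ⟨k, hk, hd⟩ := exists_le_eq_or_eq_neg (diff p)
    obtain ⟨s, hs, hst⟩ := exists_mem_labelReps (k : ZMod 2) (label p)
    refine ⟨k, hk, s, hs, ?_⟩
    have hdiff : tauClass m (diff p) (label p) = tauClass m k (label p) := by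
      rcases hd with hd | hd <;> rw [hd]
      exact tauClass_neg _ _
    rw [setOf_tensorTauEqv, hdiff]
    rcases hst with rfl | rfl
    · rfl
    · rw [← parity_natCast (m := m), tauClass_swapLabel]
  · rintro ⟨k, -, t, -, rfl⟩
    obtain ⟨p, hd, hl⟩ := exists_diff_label (k : ZMod (2 * m)) t
    exact ⟨p, by rw [setOf_tensorTauEqv, hd, hl]⟩

lemma tauClass_injOn :
    Set.InjOn (fun x : (_ : ℕ) × Label => tauClass m x.1 x.2)
      ((Finset.range (m + 1)).sigma fun k => labelReps (k : ZMod 2)) := by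
  rintro ⟨k, t⟩ hkt ⟨k', t'⟩ hkt' h
  simp only [Finset.coe_sigma, Set.mem_sigma_iff, Finset.coe_range, Set.mem_Iio,
    Finset.mem_coe] at hkt hkt'
  obtain ⟨p, hd, hl⟩ := exists_diff_label (k : ZMod (2 * m)) t
  have hp : p ∈ tauClass m k' t' := by
    simpa only [← h, hd, hl] using mem_tauClass_self p
  have hkk : k = k' := (natCast_eq_or_eq_neg_iff (m := m) (by omega) (by omega)).1 <| by
    rcases hp with ⟨hd', -⟩ | ⟨hd', -⟩ <;> rwa [hd] at hd'
  subst hkk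
  have htt : t = t' ∨ t = swapLabel (k : ZMod 2) t' := by
    rcases hp with ⟨-, hl'⟩ | ⟨-, hl'⟩
    · exact Or.inl (hl ▸ hl')
    · exact Or.inr (by rw [← hl, hl', parity_natCast])
  rw [eq_of_mem_labelReps hkt.2 hkt'.2 htt]

lemma setOf_exists_eq_add_or_eq_sub (P : ZMod (2 * m) → Prop) (d : ZMod (2 * m)) (ε δ : Bool) :
    {p : Pair m | ∃ i, P i ∧ (p = ((i, ε), (i + d, δ)) ∨ p = ((i, ε), (i - d, δ)))} =
      {q | (diff q = d ∨ diff q = -d) ∧ P q.1.1 ∧ q.1.2 = ε ∧ q.2.2 = δ} := by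
  ext ⟨⟨x, ε'⟩, ⟨y, δ'⟩⟩
  simp only [Set.mem_ofPred_eq, diff, Prod.mk.injEq]
  constructor
  · rintro ⟨i, hi, ⟨⟨rfl, rfl⟩, rfl, rfl⟩ | ⟨⟨rfl, rfl⟩, rfl, rfl⟩⟩
    · exact ⟨Or.inl (by ring), hi, rfl, rfl⟩
    · exact ⟨Or.inr (by ring), hi, rfl, rfl⟩
  · rintro ⟨hd | hd, hx, rfl, rfl⟩
    · exact ⟨x, hx, Or.inl ⟨⟨rfl, rfl⟩, by linear_combination hd, rfl⟩⟩
    · exact ⟨x, hx, Or.inr ⟨⟨rfl, rfl⟩, by linear_combination hd, rfl⟩⟩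

lemma esetD0_eq_labelSet (k : ℕ) (ε δ : Bool) :
    EsetD0 (2 * m) k ε δ = labelSet m k (0, ε, δ) := by
  refine (setOf_exists_eq_add_or_eq_sub (isEvenClass (2 * m)) k ε δ).trans ?_
  ext q
  simp only [labelSet, label, Set.mem_ofPred_eq, isEvenClass_iff, Prod.mk.injEq]

lemma esetD1_eq_labelSet (k : ℕ) (ε δ : Bool) :
    EsetD1 (2 * m) k ε δ = labelSet m k (1, ε, δ) := by
  refine (setOf_exists_eq_add_or_eq_sub (isOddClass (2 * m)) k ε δ).trans ?_
  ext q
  simp only [labelSet, label, Set.mem_ofPred_eq, isOddClass_iff, Prod.mk.injEq]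

lemma exists_tauClass_iff_of_even {k : ℕ} (hk : Even k) (S : Set (Pair m)) :
    (∃ t ∈ labelReps (k : ZMod 2), S = tauClass m k t) ↔
      S = EsetD0 (2 * m) k true true ∨ S = EsetD0 (2 * m) k false false ∨
      S = EsetD0 (2 * m) k true false ∪ EsetD0 (2 * m) k false true ∨
      S = EsetD1 (2 * m) k true true ∨ S = EsetD1 (2 * m) k false false ∨
      S = EsetD1 (2 * m) k true false ∪ EsetD1 (2 * m) k false true := by
  simp [labelReps, tauClass, ZMod.natCast_eq_zero_iff_even.mpr hk, swapLabel,
    esetD0_eq_labelSet, esetD1_eq_labelSet]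

lemma exists_tauClass_iff_of_odd {k : ℕ} (hk : Odd k) (S : Set (Pair m)) :
    (∃ t ∈ labelReps (k : ZMod 2), S = tauClass m k t) ↔
      S = EsetD0 (2 * m) k true true ∪ EsetD1 (2 * m) k true true ∨
      S = EsetD0 (2 * m) k false false ∪ EsetD1 (2 * m) k false false ∨
      S = EsetD0 (2 * m) k true false ∪ EsetD1 (2 * m) k false true ∨
      S = EsetD1 (2 * m) k true false ∪ EsetD0 (2 * m) k false true := by
  simp [labelReps, tauClass, ZMod.natCast_eq_one_iff_odd.mpr hk, swapLabel,
    esetD0_eq_labelSet, esetD1_eq_labelSet, show (1 + 1 : ZMod 2) = 0 from rfl]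

theorem card_tensorTau [NeZero m] :
    Nat.card (dihedral (2 * m)).double.TensorTau =
      ∑ k ∈ Finset.range (m + 1), (labelReps (k : ZMod 2)).card := by
  classical
  let s := Relation.EqvGen.setoid fun p q : Pair m =>
    (dihedral (2 * m)).double.tensorStep p q ∨ q = p.swap
  have hclasses : s.classes =
      {S : Set (Pair m) | ∃ p, S = {q | (dihedral (2 * m)).double.tensorTauEqv p q}} := by
    ext S
    refine exists_congr fun p => Eq.congr_right (Set.ext fun q => ?_)
    exact ⟨Relation.EqvGen.symm _ _, Relation.EqvGen.symm _ _⟩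
  have himage : s.classes = ↑(((Finset.range (m + 1)).sigma fun k => labelReps (k : ZMod 2)).image
      fun x => tauClass m x.1 x.2) := by
    rw [hclasses, setOf_tensorTauEqv_classes_eq]
    ext S
    simp only [Set.mem_ofPred_eq, Finset.coe_image, Set.mem_image, Finset.mem_coe,
      Finset.mem_sigma, Finset.mem_range, Sigma.exists, Nat.lt_succ_iff]
    constructor
    · rintro ⟨k, hk, t, ht, rfl⟩
      exact ⟨k, t, ⟨hk, ht⟩, rfl⟩
    · rintro ⟨k, t, ⟨hk, ht⟩, rfl⟩
      exact ⟨k, hk, t, ht, rfl⟩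
  refine (Nat.card_congr (Setoid.quotientEquivClasses s)).trans ?_
  rw [himage, Nat.card_coe_set_eq,
    Set.ncard_coe_finset, Finset.card_image_of_injOn tauClass_injOn, Finset.card_sigma]

end DihedralDouble

/-- for `n = 2m` with `m ≥ 1`, the quotient `D(R_n) ⊗ D(R_n) / ⟨τ⟩`
has exactly `5(m+1)` elements if `m` is odd and `5m+6` elements if `m` is even;
its elements are, for even `k ≤ m`: `E(k)ⱼ^{+,+}`, `E(k)ⱼ^{−,−}`,
`E(k)ⱼ^{+,−} ∪ E(k)ⱼ^{−,+}` (`j = 0, 1`), and for odd `k ≤ m`: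
`E(k)₀^{+,+} ∪ E(k)₁^{+,+}`, `E(k)₀^{−,−} ∪ E(k)₁^{−,−}`,
`E(k)₀^{+,−} ∪ E(k)₁^{−,+}`, `E(k)₁^{+,−} ∪ E(k)₀^{−,+}`. -/
theorem statement15 (m : ℕ) (hm : 1 ≤ m) :
    ({S : Set ((ZMod (2 * m) × Bool) × (ZMod (2 * m) × Bool)) |
        ∃ p, S = {q | ((dihedral (2 * m)).double).tensorTauEqv p q}} =
      {S | ∃ k ≤ m,
        (Even k ∧
          (S = EsetD0 (2 * m) k true true ∨
           S = EsetD0 (2 * m) k false false ∨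
           S = EsetD0 (2 * m) k true false ∪ EsetD0 (2 * m) k false true ∨
           S = EsetD1 (2 * m) k true true ∨
           S = EsetD1 (2 * m) k false false ∨
           S = EsetD1 (2 * m) k true false ∪ EsetD1 (2 * m) k false true)) ∨
        (Odd k ∧
          (S = EsetD0 (2 * m) k true true ∪ EsetD1 (2 * m) k true true ∨
           S = EsetD0 (2 * m) k false false ∪ EsetD1 (2 * m) k false false ∨
           S = EsetD0 (2 * m) k true false ∪ EsetD1 (2 * m) k false true ∨
           S = EsetD1 (2 * m) k true false ∪ EsetD0 (2 * m) k false true))}) ∧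
    Nat.card (((dihedral (2 * m)).double).TensorTau) =
      (if Odd m then 5 * (m + 1) else 5 * m + 6) := by
  have : NeZero m := ⟨by omega⟩
  refine ⟨?_, by rw [DihedralDouble.card_tensorTau, DihedralDouble.sum_card_labelReps]⟩
  rw [DihedralDouble.setOf_tensorTauEqv_classes_eq]
  ext S
  simp only [Set.mem_ofPred_eq]
  refine exists_congr fun k => and_congr_right fun _ => ?_
  rcases Nat.even_or_odd k with hk | hk
  · simp [DihedralDouble.exists_tauClass_iff_of_even hk, hk, Nat.not_odd_iff_even.mpr hk]
  · simp [DihedralDouble.exists_tauClass_iff_of_odd hk, hk, Nat.not_even_iff_odd.mpr hk]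
end

section
/- Let n = 2m with m ≥ 1, let R_n be the dihedral quandle of order n, and let D(R_n) be its symmetric double with the good involution ρ exchanging x⁺ and x⁻. The quotient set D(R_n) ⊗ D(R_n) / ⟨ρ⟩ has exactly 4(m+1) = 2n+4 elements, namely {E(k)_0^{+,+}, E(k)_0^{−,−}}, {E(k)_0^{+,−}, E(k)_0^{−,+}}, {E(k)_1^{+,+}, E(k)_1^{−,−}}, {E(k)_1^{+,−}, E(k)_1^{−,+}} for k = 0, 1, …, m. -/
namespace S16

abbrev DD (m : ℕ) := (ZMod (2 * m) × Bool) × (ZMod (2 * m) × Bool)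

def par (m : ℕ) : ZMod (2 * m) →+* ZMod 2 := ZMod.castHom ⟨m, rfl⟩ (ZMod 2)

def kfun (m : ℕ) (d : ZMod (2 * m)) : ℕ := min d.val (-d).val

def Fv (m : ℕ) (p : DD m) : ZMod 2 × ℕ × Bool :=
  (par m p.1.1, kfun m (p.2.1 - p.1.1), p.1.2 == p.2.2)

lemma zmod2_addself : ∀ a : ZMod 2, a + a = 0 := by decide

lemma zmod2_neg : ∀ a : ZMod 2, -a = a := by decide

lemma zmod2_cases : ∀ a : ZMod 2, a = 0 ∨ a = 1 := by decide

variable {m : ℕ}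

lemma par_refl (c x : ZMod (2 * m)) : par m (2 * c - x) = par m x := by
  have h1 : par m (2 * c - x) = par m c + par m c - par m x := by
    rw [show (2 : ZMod (2 * m)) * c = c + c from two_mul c, map_sub, map_add]
  rw [h1, zmod2_addself, zero_sub, zmod2_neg]

lemma par_val [NeZero (2 * m)] (x : ZMod (2 * m)) : par m x = (x.val : ZMod 2) := by
  conv_lhs => rw [show x = ((x.val : ℕ) : ZMod (2 * m)) by rw [ZMod.natCast_val, ZMod.cast_id]]
  exact map_natCast _ _

lemma par_lift [NeZero (2 * m)] (j : ZMod 2) : par m ((j.val : ZMod (2 * m))) = j := by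
  rw [map_natCast, ZMod.natCast_val, ZMod.cast_id]

lemma isEvenClass_iff [NeZero (2 * m)] (x : ZMod (2 * m)) :
    isEvenClass (2 * m) x ↔ par m x = 0 := by
  constructor
  · rintro ⟨a, ⟨b, rfl⟩, rfl⟩
    rw [map_intCast]
    push_cast
    exact zmod2_addself _
  · intro h
    rw [par_val] at h
    have h2 : 2 ∣ x.val := (ZMod.natCast_eq_zero_iff _ _).1 h
    refine ⟨(x.val : ℤ), ?_, ?_⟩
    · exact Int.even_coe_nat _ |>.2 (Nat.even_iff.2 (by omega))
    · push_cast
      rw [ZMod.natCast_val, ZMod.cast_id]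

lemma isOddClass_iff [NeZero (2 * m)] (x : ZMod (2 * m)) :
    isOddClass (2 * m) x ↔ par m x = 1 := by
  constructor
  · rintro ⟨a, ⟨b, rfl⟩, rfl⟩
    rw [map_intCast]
    push_cast
    rw [two_mul, zmod2_addself, zero_add]
  · intro h
    rw [par_val] at h
    have h2 : ¬ (2 ∣ x.val) := by
      intro hd
      rw [(ZMod.natCast_eq_zero_iff _ _).2 hd] at h
      exact zero_ne_one h
    refine ⟨(x.val : ℤ), ?_, ?_⟩
    · exact Int.odd_coe_nat _ |>.2 (Nat.odd_iff.2 (by omega))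
    · push_cast
      rw [ZMod.natCast_val, ZMod.cast_id]

lemma exists_translate [NeZero (2 * m)] {x y : ZMod (2 * m)} (h : par m x = par m y) :
    ∃ t, y = x + 2 * t := by
  have h0 : par m (y - x) = 0 := by rw [map_sub, h, sub_self]
  rw [par_val] at h0
  obtain ⟨s, hs⟩ := (ZMod.natCast_eq_zero_iff _ _).1 h0
  refine ⟨(s : ZMod (2 * m)), ?_⟩
  have hv : ((y - x).val : ZMod (2 * m)) = y - x := by rw [ZMod.natCast_val, ZMod.cast_id]
  have h2 : y - x = 2 * (s : ZMod (2 * m)) := by rw [← hv, hs]; push_cast; ring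
  linear_combination h2

lemma kfun_neg (d : ZMod (2 * m)) : kfun m (-d) = kfun m d := by
  unfold kfun
  rw [neg_neg]
  exact Nat.min_comm _ _

lemma kfun_le [NeZero (2 * m)] (d : ZMod (2 * m)) : kfun m d ≤ m := by
  have hm : 1 ≤ m := by have := NeZero.pos (2 * m); omega
  by_cases hd : d = 0
  · subst hd
    simp [kfun]
  · have h1 := ZMod.val_lt d
    have h2 : (-d).val = 2 * m - d.val := by rw [ZMod.neg_val, if_neg hd]
    unfold kfun
    omega

lemma kfun_natCast [NeZero (2 * m)] {k : ℕ} (hk : k ≤ m) : kfun m ((k : ZMod (2 * m))) = k := by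
  have hm : 1 ≤ m := by have := NeZero.pos (2 * m); omega
  have hv : ((k : ZMod (2 * m))).val = k := ZMod.val_natCast_of_lt (by omega)
  by_cases h0 : (k : ZMod (2 * m)) = 0
  · have hk0 : k = 0 := by rw [h0, ZMod.val_zero] at hv; omega
    subst hk0
    simp [kfun]
  · have h2 : (-(k : ZMod (2 * m))).val = 2 * m - k := by rw [ZMod.neg_val, if_neg h0, hv]
    unfold kfun
    rw [hv, h2]
    omega

lemma kfun_eq_iff [NeZero (2 * m)] {k : ℕ} (hk : k ≤ m) (d : ZMod (2 * m)) :
    kfun m d = k ↔ (d = (k : ZMod (2 * m)) ∨ d = -(k : ZMod (2 * m))) := by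
  constructor
  · intro h
    have hvd : ((d.val : ℕ) : ZMod (2 * m)) = d := by rw [ZMod.natCast_val, ZMod.cast_id]
    have hvnd : (((-d).val : ℕ) : ZMod (2 * m)) = -d := by rw [ZMod.natCast_val, ZMod.cast_id]
    have hor : d.val = k ∨ (-d).val = k := by unfold kfun at h; omega
    rcases hor with h1 | h1
    · left; rw [← h1, hvd]
    · right
      have : -d = (k : ZMod (2 * m)) := by rw [← h1, hvnd]
      linear_combination -this
  · rintro (rfl | rfl)
    · exact kfun_natCast hk
    · rw [kfun_neg]; exact kfun_natCast hk

end S16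
namespace S16

variable {m : ℕ}

abbrev SRel (m : ℕ) : DD m → DD m → Prop :=
  fun p q => ((dihedral (2 * m)).double).tensorStep p q ∨ q = (doubleRho p.1, doubleRho p.2)

lemma dop (a b : ZMod (2 * m) × Bool) :
    ((dihedral (2 * m)).double).op a b = (2 * b.1 - a.1, a.2) := by
  show ((if b.2 then (dihedral (2 * m)).op a.1 b.1 else (dihedral (2 * m)).inv a.1 b.1), a.2) = _
  simp [dihedral]

lemma step_refl (x y : ZMod (2 * m)) (ε δ : Bool) (c : ZMod (2 * m)) :
    Relation.EqvGen (SRel m) ((x, ε), (y, δ)) ((2 * c - x, ε), (2 * c - y, δ)) := by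
  apply Relation.EqvGen.rel
  left
  exact ⟨(c, true), by rw [dop, dop]⟩

lemma step_rho (x y : ZMod (2 * m)) (ε δ : Bool) :
    Relation.EqvGen (SRel m) ((x, ε), (y, δ)) ((x, !ε), (y, !δ)) :=
  Relation.EqvGen.rel _ _ (Or.inr rfl)

lemma step_trans (x y : ZMod (2 * m)) (ε δ : Bool) (t : ZMod (2 * m)) :
    Relation.EqvGen (SRel m) ((x, ε), (y, δ)) ((x + 2 * t, ε), (y + 2 * t, δ)) := by
  have h1 := step_refl x y ε δ 0
  have h2 := step_refl (2 * 0 - x) (2 * 0 - y) ε δ t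
  have e1 : 2 * t - (2 * 0 - x) = x + 2 * t := by ring
  have e2 : 2 * t - (2 * 0 - y) = y + 2 * t := by ring
  rw [e1, e2] at h2
  exact Relation.EqvGen.trans _ _ _ h1 h2

lemma Fv_inv {p q : DD m} (h : Relation.EqvGen (SRel m) p q) : Fv m p = Fv m q := by
  induction h with
  | rel p q h =>
    obtain ⟨⟨x, ε⟩, ⟨y, δ⟩⟩ := p
    rcases h with ⟨z, rfl⟩ | rfl
    · rw [dop, dop]
      simp only [Fv]
      refine Prod.ext (par_refl _ _).symm (Prod.ext ?_ rfl)
      show kfun m (y - x) = kfun m ((2 * z.1 - y) - (2 * z.1 - x))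
      rw [show (2 * z.1 - y) - (2 * z.1 - x) = -(y - x) by ring, kfun_neg]
    · simp only [Fv, doubleRho]
      refine Prod.ext rfl (Prod.ext rfl ?_)
      cases ε <;> cases δ <;> rfl
  | refl => rfl
  | symm _ _ _ ih => exact ih.symm
  | trans _ _ _ _ _ ih1 ih2 => exact ih1.trans ih2

def rep (m : ℕ) (v : ZMod 2 × ℕ × Bool) : DD m :=
  (((v.1.val : ZMod (2 * m)), true), ((v.1.val : ZMod (2 * m)) + (v.2.1 : ZMod (2 * m)), v.2.2))

lemma Fv_rep [NeZero (2 * m)] (j : ZMod 2) {k : ℕ} (hk : k ≤ m) (b : Bool) :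
    Fv m (rep m (j, k, b)) = (j, k, b) := by
  refine Prod.ext (par_lift j) (Prod.ext ?_ ?_)
  · show kfun m ((j.val : ZMod (2 * m)) + (k : ZMod (2 * m)) - (j.val : ZMod (2 * m))) = k
    rw [add_sub_cancel_left]
    exact kfun_natCast hk
  · show (true == b) = b
    cases b <;> rfl

lemma norm_equiv [NeZero (2 * m)] (p : DD m) :
    Relation.EqvGen (SRel m) p (rep m (Fv m p)) := by
  obtain ⟨⟨x, ε⟩, ⟨y, δ⟩⟩ := p
  have h1 : Relation.EqvGen (SRel m) ((x, ε), (y, δ)) ((x, true), (y, ε == δ)) := by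
    cases ε <;> cases δ <;>
      first
        | exact Relation.EqvGen.refl _
        | exact step_rho x y _ _
  show Relation.EqvGen (SRel m) ((x, ε), (y, δ))
    (((((par m x).val : ZMod (2 * m))), true),
      (((par m x).val : ZMod (2 * m)) + ((kfun m (y - x) : ℕ) : ZMod (2 * m)), ε == δ))
  set X0 : ZMod (2 * m) := ((par m x).val : ZMod (2 * m)) with hX0
  have hpar0 : par m x = par m X0 := by rw [hX0, par_lift]
  have hK : y - x = ((kfun m (y - x) : ℕ) : ZMod (2 * m)) ∨
      y - x = -((kfun m (y - x) : ℕ) : ZMod (2 * m)) :=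
    (kfun_eq_iff (kfun_le _) _).1 rfl
  rcases hK with hK | hK
  · obtain ⟨t, ht⟩ := exists_translate hpar0
    have h2 := step_trans x y true (ε == δ) t
    have e1 : x + 2 * t = X0 := ht.symm
    have e2 : y + 2 * t = X0 + ((kfun m (y - x) : ℕ) : ZMod (2 * m)) := by
      linear_combination hK - ht
    rw [e1, e2] at h2
    exact Relation.EqvGen.trans _ _ _ h1 h2
  · have h1b := step_refl x y true (ε == δ) 0
    have hparneg : par m (2 * 0 - x) = par m X0 := by rw [par_refl, hpar0]
    obtain ⟨t, ht⟩ := exists_translate hparneg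
    have h2 := step_trans (2 * 0 - x) (2 * 0 - y) true (ε == δ) t
    have e1 : 2 * 0 - x + 2 * t = X0 := ht.symm
    have e2 : 2 * 0 - y + 2 * t = X0 + ((kfun m (y - x) : ℕ) : ZMod (2 * m)) := by
      linear_combination -hK - ht
    rw [e1, e2] at h2
    exact Relation.EqvGen.trans _ _ _ h1 (Relation.EqvGen.trans _ _ _ h1b h2)

lemma master [NeZero (2 * m)] (p q : DD m) :
    Relation.EqvGen (SRel m) p q ↔ Fv m p = Fv m q := by
  constructor
  · exact Fv_inv
  · intro h
    have h1 := norm_equiv p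
    have h2 := norm_equiv q
    rw [h] at h1
    exact Relation.EqvGen.trans _ _ _ h1 (Relation.EqvGen.symm _ _ h2)

end S16
namespace S16

variable {m : ℕ}

lemma mem_EsetD0_iff [NeZero (2 * m)] {k : ℕ} {ε δ : Bool} {p : DD m} :
    p ∈ EsetD0 (2 * m) k ε δ ↔
      par m p.1.1 = 0 ∧ p.1.2 = ε ∧ p.2.2 = δ ∧
        (p.2.1 = p.1.1 + (k : ZMod (2 * m)) ∨ p.2.1 = p.1.1 - (k : ZMod (2 * m))) := by
  obtain ⟨⟨x, a⟩, ⟨y, c⟩⟩ := p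
  simp only [EsetD0, Set.mem_setOf_eq, Prod.mk.injEq]
  constructor
  · rintro ⟨i, hi, (⟨⟨rfl, rfl⟩, rfl, rfl⟩ | ⟨⟨rfl, rfl⟩, rfl, rfl⟩)⟩
    · exact ⟨(isEvenClass_iff _).1 hi, rfl, rfl, Or.inl rfl⟩
    · exact ⟨(isEvenClass_iff _).1 hi, rfl, rfl, Or.inr rfl⟩
  · rintro ⟨h0, rfl, rfl, (rfl | rfl)⟩
    · exact ⟨x, (isEvenClass_iff _).2 h0, Or.inl ⟨⟨rfl, rfl⟩, rfl, rfl⟩⟩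
    · exact ⟨x, (isEvenClass_iff _).2 h0, Or.inr ⟨⟨rfl, rfl⟩, rfl, rfl⟩⟩

lemma mem_EsetD1_iff [NeZero (2 * m)] {k : ℕ} {ε δ : Bool} {p : DD m} :
    p ∈ EsetD1 (2 * m) k ε δ ↔
      par m p.1.1 = 1 ∧ p.1.2 = ε ∧ p.2.2 = δ ∧
        (p.2.1 = p.1.1 + (k : ZMod (2 * m)) ∨ p.2.1 = p.1.1 - (k : ZMod (2 * m))) := by
  obtain ⟨⟨x, a⟩, ⟨y, c⟩⟩ := p
  simp only [EsetD1, Set.mem_setOf_eq, Prod.mk.injEq]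
  constructor
  · rintro ⟨i, hi, (⟨⟨rfl, rfl⟩, rfl, rfl⟩ | ⟨⟨rfl, rfl⟩, rfl, rfl⟩)⟩
    · exact ⟨(isOddClass_iff _).1 hi, rfl, rfl, Or.inl rfl⟩
    · exact ⟨(isOddClass_iff _).1 hi, rfl, rfl, Or.inr rfl⟩
  · rintro ⟨h0, rfl, rfl, (rfl | rfl)⟩
    · exact ⟨x, (isOddClass_iff _).2 h0, Or.inl ⟨⟨rfl, rfl⟩, rfl, rfl⟩⟩
    · exact ⟨x, (isOddClass_iff _).2 h0, Or.inr ⟨⟨rfl, rfl⟩, rfl, rfl⟩⟩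

lemma Fv_eq_iff [NeZero (2 * m)] {k : ℕ} (hk : k ≤ m) (j : ZMod 2) (b : Bool) (p : DD m) :
    Fv m p = (j, k, b) ↔
      par m p.1.1 = j ∧
        (p.2.1 = p.1.1 + (k : ZMod (2 * m)) ∨ p.2.1 = p.1.1 - (k : ZMod (2 * m))) ∧
        (p.1.2 == p.2.2) = b := by
  obtain ⟨⟨x, a⟩, ⟨y, c⟩⟩ := p
  simp only [Fv, Prod.mk.injEq]
  constructor
  · rintro ⟨h1, h2, h3⟩
    refine ⟨h1, ?_, h3⟩
    rcases (kfun_eq_iff hk _).1 h2 with h | h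
    · exact Or.inl (by linear_combination h)
    · exact Or.inr (by linear_combination h)
  · rintro ⟨h1, h2, h3⟩
    refine ⟨h1, ?_, h3⟩
    rw [kfun_eq_iff hk]
    rcases h2 with h | h
    · exact Or.inl (by linear_combination h)
    · exact Or.inr (by linear_combination h)

lemma union_eq0 [NeZero (2 * m)] {k : ℕ} (hk : k ≤ m) (b : Bool) :
    EsetD0 (2 * m) k true b ∪ EsetD0 (2 * m) k false (!b) = {q | Fv m q = (0, k, b)} := by
  ext p
  rw [Set.mem_union, mem_EsetD0_iff, mem_EsetD0_iff, Set.mem_setOf_eq, Fv_eq_iff hk]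
  obtain ⟨⟨x, a⟩, ⟨y, c⟩⟩ := p
  cases a <;> cases c <;> cases b <;> simp_all

lemma union_eq1 [NeZero (2 * m)] {k : ℕ} (hk : k ≤ m) (b : Bool) :
    EsetD1 (2 * m) k true b ∪ EsetD1 (2 * m) k false (!b) = {q | Fv m q = (1, k, b)} := by
  ext p
  rw [Set.mem_union, mem_EsetD1_iff, mem_EsetD1_iff, Set.mem_setOf_eq, Fv_eq_iff hk]
  obtain ⟨⟨x, a⟩, ⟨y, c⟩⟩ := p
  cases a <;> cases c <;> cases b <;> simp_all

end S16
namespace S16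

variable {m : ℕ}

def fmap (m : ℕ) [NeZero (2 * m)] (p : DD m) : ZMod 2 × Fin (m + 1) × Bool :=
  ((Fv m p).1, ⟨(Fv m p).2.1, Nat.lt_succ_of_le (kfun_le _)⟩, (Fv m p).2.2)

lemma fmap_eq_iff [NeZero (2 * m)] (p q : DD m) :
    fmap m p = fmap m q ↔ Fv m p = Fv m q := by
  constructor
  · intro h
    have h1 : (fmap m p).1 = (fmap m q).1 := congrArg Prod.fst h
    have h2 : (fmap m p).2.1 = (fmap m q).2.1 := congrArg (fun v => v.2.1) h
    have h3 : (fmap m p).2.2 = (fmap m q).2.2 := congrArg (fun v => v.2.2) h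
    have h2' : (Fv m p).2.1 = (Fv m q).2.1 := congrArg Fin.val h2
    exact Prod.ext h1 (Prod.ext h2' h3)
  · intro h
    exact Prod.ext (congrArg (fun v => v.1) h)
      (Prod.ext (Fin.ext (congrArg (fun v => v.2.1) h)) (congrArg (fun v => v.2.2) h))

lemma fmap_rep [NeZero (2 * m)] (j : ZMod 2) (k : Fin (m + 1)) (b : Bool) :
    fmap m (rep m (j, k.1, b)) = (j, k, b) := by
  have h := Fv_rep (m := m) j (Nat.lt_succ_iff.1 k.2) b
  exact Prod.ext (congrArg (fun v => v.1) h)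
    (Prod.ext (Fin.ext (congrArg (fun v => v.2.1) h)) (congrArg (fun v => v.2.2) h))

end S16

/-- for `n = 2m` with `m ≥ 1`, the quotient `D(R_n) ⊗ D(R_n) / ⟨ρ⟩`
has exactly `4(m+1) = 2n+4` elements, namely `E(k)ⱼ^{+,+} ∪ E(k)ⱼ^{−,−}` and
`E(k)ⱼ^{+,−} ∪ E(k)ⱼ^{−,+}` for `k = 0, …, m` and `j = 0, 1`. -/
theorem statement16 (m : ℕ) (hm : 1 ≤ m) :
    ({S : Set ((ZMod (2 * m) × Bool) × (ZMod (2 * m) × Bool)) |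
        ∃ p, S = {q | ((dihedral (2 * m)).double).tensorRhoEqv doubleRho p q}} =
      {S | ∃ k ≤ m,
        S = EsetD0 (2 * m) k true true ∪ EsetD0 (2 * m) k false false ∨
        S = EsetD0 (2 * m) k true false ∪ EsetD0 (2 * m) k false true ∨
        S = EsetD1 (2 * m) k true true ∪ EsetD1 (2 * m) k false false ∨
        S = EsetD1 (2 * m) k true false ∪ EsetD1 (2 * m) k false true}) ∧
    Nat.card (((dihedral (2 * m)).double).TensorRho doubleRho) = 4 * (m + 1) := by
  haveI : NeZero (2 * m) := ⟨by omega⟩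
  constructor
  · ext S
    simp only [Set.mem_setOf_eq]
    constructor
    · rintro ⟨p, rfl⟩
      have hclass : {q | ((dihedral (2 * m)).double).tensorRhoEqv doubleRho p q}
          = {q | S16.Fv m q = S16.Fv m p} := by
        ext q
        exact (S16.master p q).trans ⟨Eq.symm, Eq.symm⟩
      refine ⟨S16.kfun m (p.2.1 - p.1.1), S16.kfun_le _, ?_⟩
      have hFv : S16.Fv m p
          = (S16.par m p.1.1, S16.kfun m (p.2.1 - p.1.1), p.1.2 == p.2.2) := rfl
      rcases S16.zmod2_cases (S16.par m p.1.1) with hj | hj <;> cases hb : (p.1.2 == p.2.2)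
      · refine Or.inr (Or.inl ?_)
        rw [hclass, hFv, hj, hb]
        exact (S16.union_eq0 (S16.kfun_le _) false).symm
      · refine Or.inl ?_
        rw [hclass, hFv, hj, hb]
        exact (S16.union_eq0 (S16.kfun_le _) true).symm
      · refine Or.inr (Or.inr (Or.inr ?_))
        rw [hclass, hFv, hj, hb]
        exact (S16.union_eq1 (S16.kfun_le _) false).symm
      · refine Or.inr (Or.inr (Or.inl ?_))
        rw [hclass, hFv, hj, hb]
        exact (S16.union_eq1 (S16.kfun_le _) true).symm
    · rintro ⟨k, hk, (rfl | rfl | rfl | rfl)⟩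
      · refine ⟨S16.rep m (0, k, true), ?_⟩
        have h1 : {q | ((dihedral (2 * m)).double).tensorRhoEqv doubleRho
            (S16.rep m (0, k, true)) q} = {q | S16.Fv m q = ((0 : ZMod 2), k, true)} := by
          ext q
          exact (S16.master _ q).trans (by rw [S16.Fv_rep _ hk]; exact eq_comm)
        rw [h1]
        exact S16.union_eq0 hk true
      · refine ⟨S16.rep m (0, k, false), ?_⟩
        have h1 : {q | ((dihedral (2 * m)).double).tensorRhoEqv doubleRho
            (S16.rep m (0, k, false)) q} = {q | S16.Fv m q = ((0 : ZMod 2), k, false)} := by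
          ext q
          exact (S16.master _ q).trans (by rw [S16.Fv_rep _ hk]; exact eq_comm)
        rw [h1]
        exact S16.union_eq0 hk false
      · refine ⟨S16.rep m (1, k, true), ?_⟩
        have h1 : {q | ((dihedral (2 * m)).double).tensorRhoEqv doubleRho
            (S16.rep m (1, k, true)) q} = {q | S16.Fv m q = ((1 : ZMod 2), k, true)} := by
          ext q
          exact (S16.master _ q).trans (by rw [S16.Fv_rep _ hk]; exact eq_comm)
        rw [h1]
        exact S16.union_eq1 hk true
      · refine ⟨S16.rep m (1, k, false), ?_⟩
        have h1 : {q | ((dihedral (2 * m)).double).tensorRhoEqv doubleRho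
            (S16.rep m (1, k, false)) q} = {q | S16.Fv m q = ((1 : ZMod 2), k, false)} := by
          ext q
          exact (S16.master _ q).trans (by rw [S16.Fv_rep _ hk]; exact eq_comm)
        rw [h1]
        exact S16.union_eq1 hk false
  · have hlift : ∀ p q : S16.DD m, Relation.EqvGen (S16.SRel m) p q →
        S16.fmap m p = S16.fmap m q := by
      intro p q h
      exact (S16.fmap_eq_iff p q).2 (S16.Fv_inv h)
    let g : ((dihedral (2 * m)).double).TensorRho doubleRho → ZMod 2 × Fin (m + 1) × Bool :=
      Quotient.lift (S16.fmap m) hlift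
    have hbij : Function.Bijective g := by
      constructor
      · intro a b
        refine Quotient.inductionOn₂ a b ?_
        intro p q h
        exact Quotient.sound ((S16.master p q).2 ((S16.fmap_eq_iff p q).1 h))
      · rintro ⟨j, k, b⟩
        exact ⟨Quotient.mk _ (S16.rep m (j, k.1, b)), S16.fmap_rep j k b⟩
    rw [Nat.card_eq_of_bijective g hbij, Nat.card_prod, Nat.card_prod, Nat.card_zmod]
    simp [Nat.card_eq_fintype_card]
    ring
end

section
/- Let n = 2m with m ≥ 1, let R_n be the dihedral quandle of order n, and let D(R_n) be its symmetric double with the good involution ρ exchanging x⁺ and x⁻. The quotient set D(R_n) ⊗ D(R_n) / ⟨τ, ρ⟩ has exactly 3(m+1) elements if m is odd, and exactly 3m+4 elements if m is even; its elements are, for each even k with 0 ≤ k ≤ m: {E(k)_0^{+,+}, E(k)_0^{−,−}}, {E(k)_0^{+,−}, E(k)_0^{−,+}}, {E(k)_1^{+,+}, E(k)_1^{−,−}}, {E(k)_1^{+,−}, E(k)_1^{−,+}}, and for each odd k with 0 ≤ k ≤ m: {E(k)_0^{+,+}, E(k)_0^{−,−}, E(k)_1^{+,+}, E(k)_1^{−,−}}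 and {E(k)_0^{+,−}, E(k)_0^{−,+}, E(k)_1^{+,−}, E(k)_1^{−,+}}. -/
namespace S17

open Relation

abbrev XX (m : ℕ) := ZMod (2*m)
abbrev PP (m : ℕ) := (XX m × Bool) × (XX m × Bool)

def par (m : ℕ) : ZMod (2*m) →+* ZMod 2 := ZMod.castHom ⟨m, rfl⟩ (ZMod 2)

def kOf (m : ℕ) (d : ZMod (2*m)) : ℕ := min d.val (2*m - d.val)

def dd {m : ℕ} (p : PP m) : XX m := p.2.1 - p.1.1

def ψ (m : ℕ) (p : PP m) : ℕ × Bool × ZMod 2 :=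
  (kOf m (dd p), xor p.1.2 p.2.2, (1 + par m (dd p)) * par m p.1.1)

lemma z2 : ∀ a : ZMod 2, a = 0 ∨ a = 1 := by decide

lemma neg2 : ∀ a : ZMod 2, -a = a := by decide

variable {m : ℕ}

lemma par_natCast (k : ℕ) : par m (k : XX m) = (k : ZMod 2) := map_natCast _ k

lemma natpar0 {v : ℕ} : ((v : ZMod 2) = 0) ↔ v % 2 = 0 := by
  rw [ZMod.natCast_eq_zero_iff]; omega

lemma natpar1 {v : ℕ} : ((v : ZMod 2) = 1) ↔ v % 2 = 1 := by
  rcases z2 (v : ZMod 2) with h | h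
  · rw [h]
    have := natpar0.1 h
    constructor
    · intro h2; exact absurd h2.symm (by decide)
    · omega
  · rw [h]
    have : ¬ ((v : ZMod 2) = 0) := by rw [h]; decide
    rw [natpar0] at this
    constructor
    · intro _; omega
    · intro _; rfl

lemma par_val (hm : 1 ≤ m) (x : XX m) : par m x = ((x.val : ℕ) : ZMod 2) := by
  haveI : NeZero (2*m) := ⟨by omega⟩
  conv_lhs => rw [← ZMod.natCast_zmod_val x]
  rw [par_natCast]

lemma isEvenClass_iff (hm : 1 ≤ m) (x : XX m) : isEvenClass (2*m) x ↔ par m x = 0 := by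
  haveI : NeZero (2*m) := ⟨by omega⟩
  constructor
  · rintro ⟨a, ⟨b, rfl⟩, rfl⟩
    rw [map_intCast (par m)]
    have : ((b + b : ℤ) : ZMod 2) = 0 := by
      rw [ZMod.intCast_zmod_eq_zero_iff_dvd]; exact ⟨b, by ring⟩
    exact this
  · intro h
    refine ⟨(x.val : ℤ), ?_, by push_cast; exact ZMod.natCast_zmod_val x⟩
    rw [par_val hm, natpar0] at h
    refine ⟨(x.val / 2 : ℕ), ?_⟩
    have h2 : x.val = x.val / 2 + x.val / 2 := by omega
    exact_mod_cast congrArg (fun t : ℕ => (t : ℤ)) h2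

lemma isOddClass_iff (hm : 1 ≤ m) (x : XX m) : isOddClass (2*m) x ↔ par m x = 1 := by
  haveI : NeZero (2*m) := ⟨by omega⟩
  constructor
  · rintro ⟨a, ⟨b, rfl⟩, rfl⟩
    rw [map_intCast (par m)]
    push_cast
    rw [show (2 : ZMod 2) = 0 by decide]
    ring
  · intro h
    refine ⟨(x.val : ℤ), ?_, by push_cast; exact ZMod.natCast_zmod_val x⟩
    rw [par_val hm, natpar1] at h
    refine ⟨((x.val - 1) / 2 : ℕ), ?_⟩
    have h2 : x.val = 2 * ((x.val - 1) / 2) + 1 := by omega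
    exact_mod_cast congrArg (fun t : ℕ => (t : ℤ)) h2

lemma kOf_le (hm : 1 ≤ m) (d : XX m) : kOf m d ≤ m := by
  haveI : NeZero (2*m) := ⟨by omega⟩
  have h := ZMod.val_lt d
  unfold kOf
  rcases Nat.le_total d.val (2*m - d.val) with h1 | h1
  · rw [min_eq_left h1]; omega
  · rw [min_eq_right h1]; omega

lemma kOf_spec (hm : 1 ≤ m) (d : XX m) :
    d = (kOf m d : XX m) ∨ d = -(kOf m d : XX m) := by
  haveI : NeZero (2*m) := ⟨by omega⟩
  have h := ZMod.val_lt d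
  have hv : ((d.val : ℕ) : XX m) = d := ZMod.natCast_zmod_val d
  unfold kOf
  rcases Nat.le_total d.val (2*m - d.val) with h1 | h1
  · rw [min_eq_left h1]; left; exact hv.symm
  · rw [min_eq_right h1]; right
    have : ((2*m - d.val : ℕ) : XX m) = ((2*m : ℕ) : XX m) - ((d.val : ℕ) : XX m) :=
      Nat.cast_sub (by omega)
    rw [this, hv, ZMod.natCast_self]
    ring

lemma kOf_natCast (hm : 1 ≤ m) {k : ℕ} (hk : k ≤ m) : kOf m (k : XX m) = k := by
  have hv : ((k : ℕ) : XX m).val = k := ZMod.val_natCast_of_lt (by omega)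
  unfold kOf
  rw [hv, min_eq_left (by omega)]

lemma kOf_neg_natCast (hm : 1 ≤ m) {k : ℕ} (hk : k ≤ m) : kOf m (-(k : XX m)) = k := by
  haveI : NeZero (2*m) := ⟨by omega⟩
  rcases Nat.eq_zero_or_pos k with rfl | hk0
  · simpa using kOf_natCast hm (Nat.zero_le m)
  · have hv : ((k : ℕ) : XX m).val = k := ZMod.val_natCast_of_lt (by omega)
    have hne : (k : XX m) ≠ 0 := by
      intro h; rw [h, ZMod.val_zero] at hv; omega
    have hnv : (-(k : XX m)).val = 2*m - k := by
      rw [ZMod.neg_val, if_neg hne, hv]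
    unfold kOf
    rw [hnv, min_eq_right (by omega)]
    omega

lemma kOf_eq_iff (hm : 1 ≤ m) {k : ℕ} (hk : k ≤ m) (d : XX m) :
    kOf m d = k ↔ (d = (k : XX m) ∨ d = -(k : XX m)) := by
  constructor
  · rintro rfl
    exact kOf_spec hm d
  · rintro (rfl | rfl)
    · exact kOf_natCast hm hk
    · exact kOf_neg_natCast hm hk

lemma kOf_neg (hm : 1 ≤ m) (d : XX m) : kOf m (-d) = kOf m d := by
  have hkle : kOf m d ≤ m := kOf_le hm d
  set k := kOf m d with hk
  rcases kOf_spec hm d with h | h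
  · rw [h, kOf_neg_natCast hm hkle]
  · rw [h, neg_neg, kOf_natCast hm hkle]

lemma par_kOf (hm : 1 ≤ m) (d : XX m) : par m d = ((kOf m d : ℕ) : ZMod 2) := by
  set k := kOf m d with hk
  rcases kOf_spec hm d with h | h
  · rw [h, par_natCast]
  · rw [h, map_neg, par_natCast, neg2]

def Erel (m : ℕ) : PP m → PP m → Prop :=
  ((dihedral (2*m)).double).tensorTauRhoEqv doubleRho

lemma op_eval (a b : XX m × Bool) :
    ((dihedral (2*m)).double).op a b = (2*b.1 - a.1, a.2) := by
  show (if b.2 then (dihedral (2*m)).op a.1 b.1 else (dihedral (2*m)).inv a.1 b.1, a.2) = _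
  cases b.2 <;> rfl

lemma e_step (x y z : XX m) (ε δ : Bool) :
    Erel m ((x, ε), (y, δ)) ((2*z - x, ε), (2*z - y, δ)) :=
  Relation.EqvGen.rel _ _ (Or.inl ⟨(z, true), by rw [op_eval, op_eval]⟩)

lemma e_tau (p : PP m) : Erel m p p.swap :=
  Relation.EqvGen.rel _ _ (Or.inr (Or.inl rfl))

lemma e_rho (p : PP m) : Erel m p (doubleRho p.1, doubleRho p.2) :=
  Relation.EqvGen.rel _ _ (Or.inr (Or.inr rfl))

lemma Erel.trans' {p q r : PP m} (h1 : Erel m p q) (h2 : Erel m q r) : Erel m p r :=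
  Relation.EqvGen.trans _ _ _ h1 h2

lemma Erel.symm' {p q : PP m} (h1 : Erel m p q) : Erel m q p :=
  Relation.EqvGen.symm _ _ h1

lemma e_translate (x y t : XX m) (ε δ : Bool) :
    Erel m ((x, ε), (y, δ)) ((x + 2*t, ε), (y + 2*t, δ)) := by
  refine (e_step x y 0 ε δ).trans' ?_
  have h1 : x + 2*t = 2*t - (2*0 - x) := by ring
  have h2 : y + 2*t = 2*t - (2*0 - y) := by ring
  rw [h1, h2]
  exact e_step _ _ t ε δ

lemma e_swap_bool (x y : XX m) (ε δ : Bool) :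
    Erel m ((x, ε), (y, δ)) ((y, ε), (x, δ)) := by
  cases ε <;> cases δ
  · exact e_tau _
  · exact (e_tau _).trans' (e_rho _)
  · exact (e_tau _).trans' (e_rho _)
  · exact e_tau _

lemma e_flip (x y : XX m) (ε δ : Bool) :
    Erel m ((x, ε), (y, δ)) ((x, !ε), (y, !δ)) :=
  e_rho _

lemma even_of_par_zero (hm : 1 ≤ m) {z : XX m} (h : par m z = 0) :
    ∃ t : XX m, z = 2*t := by
  haveI : NeZero (2*m) := ⟨by omega⟩
  rw [par_val hm, natpar0] at h
  refine ⟨((z.val / 2 : ℕ) : XX m), ?_⟩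
  have h2 : z.val = 2 * (z.val / 2) := by omega
  conv_lhs => rw [← ZMod.natCast_zmod_val z]
  rw [show ((z.val : ℕ) : XX m) = ((2 * (z.val/2) : ℕ) : XX m) by rw [← h2]]
  push_cast
  ring

lemma e_reach_core (hm : 1 ≤ m) (x y x' y' : XX m) (ε δ : Bool)
    (hpar : par m x' = par m x)
    (hd : y' - x' = y - x ∨ y' - x' = -(y - x)) :
    Erel m ((x, ε), (y, δ)) ((x', ε), (y', δ)) := by
  have hpz : par m (x' - x) = 0 := by
    rw [map_sub, hpar]; ring
  obtain ⟨t, ht⟩ := even_of_par_zero hm hpz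
  rcases hd with h | h
  · have hx' : x' = x + 2*t := by rw [← ht]; ring
    have hy' : y' = y + 2*t := by
      have : y' = x' + (y - x) := by linear_combination h
      rw [this, hx']; ring
    rw [hx', hy']
    exact e_translate x y t ε δ
  · have hx' : x' = 2*(t + x) - x := by rw [show 2*(t+x) - x = 2*t + x by ring, ← ht]; ring
    have hy' : y' = 2*(t + x) - y := by
      have : y' = x' - (y - x) := by linear_combination h
      rw [this, hx']; ring
    rw [hx', hy']
    exact e_step x y (t + x) ε δ

lemma jp_aux1 : ∀ a b c : ZMod 2, (1 + a) * (2*b - c) = (1 + a) * c := by decide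

lemma jp_aux2 : ∀ a b : ZMod 2, (1 + a) * (b + a) = (1 + a) * b := by decide

lemma xor_not : ∀ ε δ : Bool, xor (!ε) (!δ) = xor ε δ := by decide

lemma par_second (x y : XX m) : par m y = par m x + par m (y - x) := by
  rw [map_sub]; ring

lemma psi_invariant (hm : 1 ≤ m) (p q : PP m) (h : Erel m p q) : ψ m p = ψ m q := by
  induction h with
  | rel p q hr =>
    obtain ⟨⟨x, ε⟩, ⟨y, δ⟩⟩ := p
    rcases hr with ⟨z, rfl⟩ | rfl | rfl
    · rw [op_eval, op_eval]
      simp only [ψ, dd, Prod.swap_prod_mk]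
      have hd : (2*z.1 - y) - (2*z.1 - x) = -(y - x) := by ring
      rw [hd, kOf_neg hm, map_neg, neg2]
      refine Prod.ext rfl (Prod.ext rfl ?_)
      have hz : par m (2*z.1 - x) = 2 * par m z.1 - par m x := by
        rw [map_sub, map_mul, map_ofNat]
      show (1 + par m (y - x)) * par m x = (1 + par m (y - x)) * par m (2*z.1 - x)
      rw [hz, jp_aux1]
    · simp only [ψ, dd, Prod.swap_prod_mk]
      have hd : x - y = -(y - x) := by ring
      rw [hd, kOf_neg hm, map_neg, neg2]
      refine Prod.ext rfl (Prod.ext (by rw [Bool.xor_comm]) ?_)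
      show (1 + par m (y - x)) * par m x = (1 + par m (y - x)) * par m y
      rw [par_second x y, jp_aux2]
    · simp only [ψ, dd, doubleRho]
      rw [xor_not]
  | refl p => rfl
  | symm _ _ _ ih => exact ih.symm
  | trans _ _ _ _ _ ih1 ih2 => exact ih1.trans ih2
lemma bool_xor_cases : ∀ ε δ ε' δ' : Bool,
    xor ε δ = xor ε' δ' → (ε' = ε ∧ δ' = δ) ∨ (ε' = !ε ∧ δ' = !δ) := by decide

lemma z2_cases : ∀ a b : ZMod 2, a = b ∨ a = b + 1 := by decide

lemma psi_complete (hm : 1 ≤ m) (p q : PP m) (h : ψ m p = ψ m q) : Erel m p q := by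
  obtain ⟨⟨x, ε⟩, ⟨y, δ⟩⟩ := p
  obtain ⟨⟨x', ε'⟩, ⟨y', δ'⟩⟩ := q
  have h1 : kOf m (y - x) = kOf m (y' - x') := congrArg Prod.fst h
  have h2 : xor ε δ = xor ε' δ' := congrArg (fun t => t.2.1) h
  have h3 : (1 + par m (y - x)) * par m x = (1 + par m (y' - x')) * par m x' :=
    congrArg (fun t => t.2.2) h
  have hkle : kOf m (y - x) ≤ m := kOf_le hm _
  have hd : y' - x' = y - x ∨ y' - x' = -(y - x) := by
    rcases kOf_spec hm (y - x) with ha | ha <;>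
      rcases kOf_spec hm (y' - x') with hb | hb <;>
        rw [← h1] at hb
    · left; linear_combination hb - ha
    · right; linear_combination hb + ha
    · right; linear_combination hb + ha
    · left; linear_combination hb - ha
  have hpd : par m (y' - x') = par m (y - x) := by
    rw [par_kOf hm, par_kOf hm, h1]
  -- reduce to the case ε' = ε, δ' = δ
  suffices hmain : Erel m ((x, ε), (y, δ)) ((x', ε), (y', δ)) by
    rcases bool_xor_cases ε δ ε' δ' h2 with ⟨rfl, rfl⟩ | ⟨rfl, rfl⟩
    · exact hmain
    · exact hmain.trans' (e_flip x' y' ε δ)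
  rw [hpd] at h3
  rcases z2 (par m (y - x)) with hp | hp
  · have hpx : par m x' = par m x := by
      rw [hp] at h3
      have : ∀ a b : ZMod 2, (1 + 0) * a = (1 + 0) * b → b = a := by decide
      exact this _ _ h3
    exact e_reach_core hm x y x' y' ε δ hpx hd
  · rcases z2_cases (par m x') (par m x) with hpx | hpx
    · exact e_reach_core hm x y x' y' ε δ hpx hd
    · refine (e_swap_bool x y ε δ).trans' ?_
      have hpy : par m x' = par m y := by
        rw [par_second x y, hp, hpx]
      refine e_reach_core hm y x x' y' ε δ hpy ?_
      rcases hd with h | h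
      · right; rw [h]; ring
      · left; rw [h]; ring

lemma class_eq_fiber (hm : 1 ≤ m) (p : PP m) :
    {q | Erel m p q} = {q | ψ m q = ψ m p} := by
  ext q
  exact ⟨fun h => (psi_invariant hm _ _ h).symm,
    fun h => psi_complete hm _ _ h.symm⟩

lemma mem_EsetD0 (hm : 1 ≤ m) (k : ℕ) (ε δ : Bool) (q : PP m) :
    q ∈ EsetD0 (2*m) k ε δ ↔
      par m q.1.1 = 0 ∧ q.1.2 = ε ∧ q.2.2 = δ ∧
        (q.2.1 = q.1.1 + (k : XX m) ∨ q.2.1 = q.1.1 - (k : XX m)) := by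
  obtain ⟨⟨x, b1⟩, ⟨y, b2⟩⟩ := q
  constructor
  · rintro ⟨i, hi, h | h⟩ <;> simp only [Prod.mk.injEq] at h
    · obtain ⟨⟨rfl, rfl⟩, rfl, rfl⟩ := h
      exact ⟨(isEvenClass_iff hm _).1 hi, rfl, rfl, Or.inl rfl⟩
    · obtain ⟨⟨rfl, rfl⟩, rfl, rfl⟩ := h
      exact ⟨(isEvenClass_iff hm _).1 hi, rfl, rfl, Or.inr rfl⟩
  · rintro ⟨hp, hb1, hb2, hd⟩
    have h1 : b1 = ε := hb1
    have h2 : b2 = δ := hb2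
    subst h1; subst h2
    refine ⟨x, (isEvenClass_iff hm x).2 hp, ?_⟩
    rcases hd with h | h
    · have hy : y = x + (k : XX m) := h
      subst hy; exact Or.inl rfl
    · have hy : y = x - (k : XX m) := h
      subst hy; exact Or.inr rfl

lemma mem_EsetD1 (hm : 1 ≤ m) (k : ℕ) (ε δ : Bool) (q : PP m) :
    q ∈ EsetD1 (2*m) k ε δ ↔
      par m q.1.1 = 1 ∧ q.1.2 = ε ∧ q.2.2 = δ ∧
        (q.2.1 = q.1.1 + (k : XX m) ∨ q.2.1 = q.1.1 - (k : XX m)) := by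
  obtain ⟨⟨x, b1⟩, ⟨y, b2⟩⟩ := q
  constructor
  · rintro ⟨i, hi, h | h⟩ <;> simp only [Prod.mk.injEq] at h
    · obtain ⟨⟨rfl, rfl⟩, rfl, rfl⟩ := h
      exact ⟨(isOddClass_iff hm _).1 hi, rfl, rfl, Or.inl rfl⟩
    · obtain ⟨⟨rfl, rfl⟩, rfl, rfl⟩ := h
      exact ⟨(isOddClass_iff hm _).1 hi, rfl, rfl, Or.inr rfl⟩
  · rintro ⟨hp, hb1, hb2, hd⟩
    have h1 : b1 = ε := hb1
    have h2 : b2 = δ := hb2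
    subst h1; subst h2
    refine ⟨x, (isOddClass_iff hm x).2 hp, ?_⟩
    rcases hd with h | h
    · have hy : y = x + (k : XX m) := h
      subst hy; exact Or.inl rfl
    · have hy : y = x - (k : XX m) := h
      subst hy; exact Or.inr rfl

lemma kOf_dd_iff (hm : 1 ≤ m) {k : ℕ} (hk : k ≤ m) (x y : XX m) :
    kOf m (y - x) = k ↔ (y = x + (k : XX m) ∨ y = x - (k : XX m)) := by
  rw [kOf_eq_iff hm hk]
  constructor
  · rintro (h | h)
    · left; linear_combination h
    · right; linear_combination h
  · rintro (h | h)
    · left; linear_combination h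
    · right; linear_combination h

lemma fiber_eq (hm : 1 ≤ m) {k : ℕ} (hk : k ≤ m) (s : Bool) (j : ZMod 2) :
    {q : PP m | ψ m q = (k, s, j)} =
      {q : PP m | (q.2.1 = q.1.1 + (k : XX m) ∨ q.2.1 = q.1.1 - (k : XX m)) ∧
        xor q.1.2 q.2.2 = s ∧ (1 + (k : ZMod 2)) * par m q.1.1 = j} := by
  ext ⟨⟨x, b1⟩, ⟨y, b2⟩⟩
  simp only [Set.mem_setOf_eq, ψ, dd, Prod.mk.injEq]
  constructor
  · rintro ⟨hk1, hs, hj⟩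
    have hpd : par m (y - x) = (k : ZMod 2) := by rw [par_kOf hm, hk1]
    rw [hpd] at hj
    exact ⟨(kOf_dd_iff hm hk x y).1 hk1, hs, hj⟩
  · rintro ⟨hD, hs, hj⟩
    have hk1 : kOf m (y - x) = k := (kOf_dd_iff hm hk x y).2 hD
    have hpd : par m (y - x) = (k : ZMod 2) := by rw [par_kOf hm, hk1]
    exact ⟨hk1, hs, by rw [hpd]; exact hj⟩

lemma zmod2_simp1 : (1 + (0:ZMod 2)) = 1 := by decide
lemma zmod2_simp2 : (1 + (1:ZMod 2)) = 0 := by decide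

lemma union_even_tt (hm : 1 ≤ m) {k : ℕ} (hk : k ≤ m) (hke : k % 2 = 0) (j : ZMod 2) :
    (if j = 0 then EsetD0 (2*m) k true true ∪ EsetD0 (2*m) k false false
     else EsetD1 (2*m) k true true ∪ EsetD1 (2*m) k false false)
      = {q | ψ m q = (k, false, j)} := by
  rw [fiber_eq hm hk, show ((k : ZMod 2)) = 0 from natpar0.2 hke]
  rcases z2 j with rfl | rfl
  · rw [if_pos rfl]
    ext ⟨⟨x, b1⟩, ⟨y, b2⟩⟩
    simp only [Set.mem_union, mem_EsetD0 hm, Set.mem_setOf_eq, zmod2_simp1, one_mul]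
    cases b1 <;> cases b2 <;> simp <;> tauto
  · rw [if_neg (by decide)]
    ext ⟨⟨x, b1⟩, ⟨y, b2⟩⟩
    simp only [Set.mem_union, mem_EsetD1 hm, Set.mem_setOf_eq, zmod2_simp1, one_mul]
    cases b1 <;> cases b2 <;> simp <;> tauto

lemma union_even_tf (hm : 1 ≤ m) {k : ℕ} (hk : k ≤ m) (hke : k % 2 = 0) (j : ZMod 2) :
    (if j = 0 then EsetD0 (2*m) k true false ∪ EsetD0 (2*m) k false true
     else EsetD1 (2*m) k true false ∪ EsetD1 (2*m) k false true)
      = {q | ψ m q = (k, true, j)} := by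
  rw [fiber_eq hm hk, show ((k : ZMod 2)) = 0 from natpar0.2 hke]
  rcases z2 j with rfl | rfl
  · rw [if_pos rfl]
    ext ⟨⟨x, b1⟩, ⟨y, b2⟩⟩
    simp only [Set.mem_union, mem_EsetD0 hm, Set.mem_setOf_eq, zmod2_simp1, one_mul]
    cases b1 <;> cases b2 <;> simp <;> tauto
  · rw [if_neg (by decide)]
    ext ⟨⟨x, b1⟩, ⟨y, b2⟩⟩
    simp only [Set.mem_union, mem_EsetD1 hm, Set.mem_setOf_eq, zmod2_simp1, one_mul]
    cases b1 <;> cases b2 <;> simp <;> tauto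

lemma union_odd_tt (hm : 1 ≤ m) {k : ℕ} (hk : k ≤ m) (hko : k % 2 = 1) :
    EsetD0 (2*m) k true true ∪ EsetD0 (2*m) k false false ∪
      EsetD1 (2*m) k true true ∪ EsetD1 (2*m) k false false
      = {q | ψ m q = (k, false, 0)} := by
  rw [fiber_eq hm hk, show ((k : ZMod 2)) = 1 from natpar1.2 hko]
  ext ⟨⟨x, b1⟩, ⟨y, b2⟩⟩
  simp only [Set.mem_union, mem_EsetD0 hm, mem_EsetD1 hm, Set.mem_setOf_eq,
    zmod2_simp2, zero_mul]
  have hx := z2 (par m x)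
  cases b1 <;> cases b2 <;> simp <;> tauto

lemma union_odd_tf (hm : 1 ≤ m) {k : ℕ} (hk : k ≤ m) (hko : k % 2 = 1) :
    EsetD0 (2*m) k true false ∪ EsetD0 (2*m) k false true ∪
      EsetD1 (2*m) k true false ∪ EsetD1 (2*m) k false true
      = {q | ψ m q = (k, true, 0)} := by
  rw [fiber_eq hm hk, show ((k : ZMod 2)) = 1 from natpar1.2 hko]
  ext ⟨⟨x, b1⟩, ⟨y, b2⟩⟩
  simp only [Set.mem_union, mem_EsetD0 hm, mem_EsetD1 hm, Set.mem_setOf_eq,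
    zmod2_simp2, zero_mul]
  have hx := z2 (par m x)
  cases b1 <;> cases b2 <;> simp <;> tauto

lemma psi_point (hm : 1 ≤ m) {k : ℕ} (hk : k ≤ m) (x0 : XX m) (b2 : Bool) :
    ψ m ((x0, true), (x0 + (k : XX m), b2))
      = (k, xor true b2, (1 + (k : ZMod 2)) * par m x0) := by
  show (kOf m (x0 + (k : XX m) - x0), _, (1 + par m (x0 + (k : XX m) - x0)) * par m x0) = _
  rw [show x0 + (k : XX m) - x0 = (k : XX m) by ring, kOf_natCast hm hk, par_natCast]

lemma class_eq_fiber' (hm : 1 ≤ m) (p : PP m) :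
    {q | ((dihedral (2 * m)).double).tensorTauRhoEqv doubleRho p q} = {q | ψ m q = ψ m p} :=
  class_eq_fiber hm p

lemma part1 (m : ℕ) (hm : 1 ≤ m) :
    ({S : Set ((ZMod (2 * m) × Bool) × (ZMod (2 * m) × Bool)) |
        ∃ p, S = {q | ((dihedral (2 * m)).double).tensorTauRhoEqv doubleRho p q}} =
      {S | ∃ k ≤ m,
        (Even k ∧
          (S = EsetD0 (2 * m) k true true ∪ EsetD0 (2 * m) k false false ∨
           S = EsetD0 (2 * m) k true false ∪ EsetD0 (2 * m) k false true ∨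
           S = EsetD1 (2 * m) k true true ∪ EsetD1 (2 * m) k false false ∨
           S = EsetD1 (2 * m) k true false ∪ EsetD1 (2 * m) k false true)) ∨
        (Odd k ∧
          (S = EsetD0 (2 * m) k true true ∪ EsetD0 (2 * m) k false false ∪
               EsetD1 (2 * m) k true true ∪ EsetD1 (2 * m) k false false ∨
           S = EsetD0 (2 * m) k true false ∪ EsetD0 (2 * m) k false true ∪
               EsetD1 (2 * m) k true false ∪ EsetD1 (2 * m) k false true))}) := by
  ext S
  simp only [Set.mem_setOf_eq]
  constructor
  · rintro ⟨p, rfl⟩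
    have hS : {q | ((dihedral (2 * m)).double).tensorTauRhoEqv doubleRho p q}
        = {q | ψ m q = ψ m p} := class_eq_fiber hm p
    refine ⟨kOf m (dd p), kOf_le hm _, ?_⟩
    have hψ0 : ψ m p = (kOf m (dd p), xor p.1.2 p.2.2,
        (1 + par m (dd p)) * par m p.1.1) := rfl
    rcases Nat.mod_two_eq_zero_or_one (kOf m (dd p)) with hke | hko
    · left
      refine ⟨Nat.even_iff.2 hke, ?_⟩
      cases hs : xor p.1.2 p.2.2 <;>
        rcases z2 ((1 + par m (dd p)) * par m p.1.1) with hj | hj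
      · refine Or.inl ?_
        rw [hS, show ψ m p = (kOf m (dd p), false, (0:ZMod 2)) by rw [hψ0, hs, hj]]
        rw [← union_even_tt hm (kOf_le hm _) hke 0, if_pos rfl]
      · refine Or.inr (Or.inr (Or.inl ?_))
        rw [hS, show ψ m p = (kOf m (dd p), false, (1:ZMod 2)) by rw [hψ0, hs, hj]]
        rw [← union_even_tt hm (kOf_le hm _) hke 1, if_neg (by decide)]
      · refine Or.inr (Or.inl ?_)
        rw [hS, show ψ m p = (kOf m (dd p), true, (0:ZMod 2)) by rw [hψ0, hs, hj]]
        rw [← union_even_tf hm (kOf_le hm _) hke 0, if_pos rfl]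
      · refine Or.inr (Or.inr (Or.inr ?_))
        rw [hS, show ψ m p = (kOf m (dd p), true, (1:ZMod 2)) by rw [hψ0, hs, hj]]
        rw [← union_even_tf hm (kOf_le hm _) hke 1, if_neg (by decide)]
    · right
      refine ⟨Nat.odd_iff.2 hko, ?_⟩
      have hpd : par m (dd p) = 1 := by
        rw [par_kOf hm]; exact natpar1.2 hko
      have hj : (1 + par m (dd p)) * par m p.1.1 = 0 := by
        rw [hpd, zmod2_simp2, zero_mul]
      cases hs : xor p.1.2 p.2.2
      · refine Or.inl ?_
        rw [hS, show ψ m p = (kOf m (dd p), false, (0:ZMod 2)) by rw [hψ0, hs, hj]]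
        rw [← union_odd_tt hm (kOf_le hm _) hko]
      · refine Or.inr ?_
        rw [hS, show ψ m p = (kOf m (dd p), true, (0:ZMod 2)) by rw [hψ0, hs, hj]]
        rw [← union_odd_tf hm (kOf_le hm _) hko]
  · rintro ⟨k, hk, ⟨hke, hS⟩ | ⟨hko, hS⟩⟩
    · have hke2 : k % 2 = 0 := Nat.even_iff.1 hke
      rcases hS with rfl | rfl | rfl | rfl
      · refine ⟨((0, true), (0 + (k : XX m), true)), ?_⟩
        rw [class_eq_fiber' hm, psi_point hm hk 0 true, map_zero, mul_zero]
        simp only [Bool.true_xor, Bool.not_true, Bool.not_false]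
        rw [← union_even_tt hm hk hke2 0, if_pos rfl]
      · refine ⟨((0, true), (0 + (k : XX m), false)), ?_⟩
        rw [class_eq_fiber' hm, psi_point hm hk 0 false, map_zero, mul_zero]
        simp only [Bool.true_xor, Bool.not_true, Bool.not_false]
        rw [← union_even_tf hm hk hke2 0, if_pos rfl]
      · refine ⟨((1, true), (1 + (k : XX m), true)), ?_⟩
        rw [class_eq_fiber' hm, psi_point hm hk 1 true, map_one]
        rw [show (1 + (k:ZMod 2)) * 1 = 1 by rw [natpar0.2 hke2]; decide]
        simp only [Bool.true_xor, Bool.not_true, Bool.not_false]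
        rw [← union_even_tt hm hk hke2 1, if_neg (by decide)]
      · refine ⟨((1, true), (1 + (k : XX m), false)), ?_⟩
        rw [class_eq_fiber' hm, psi_point hm hk 1 false, map_one]
        rw [show (1 + (k:ZMod 2)) * 1 = 1 by rw [natpar0.2 hke2]; decide]
        simp only [Bool.true_xor, Bool.not_true, Bool.not_false]
        rw [← union_even_tf hm hk hke2 1, if_neg (by decide)]
    · have hko2 : k % 2 = 1 := Nat.odd_iff.1 hko
      rcases hS with rfl | rfl
      · refine ⟨((0, true), (0 + (k : XX m), true)), ?_⟩
        rw [class_eq_fiber' hm, psi_point hm hk 0 true, map_zero, mul_zero]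
        simp only [Bool.true_xor, Bool.not_true, Bool.not_false]
        rw [← union_odd_tt hm hk hko2]
      · refine ⟨((0, true), (0 + (k : XX m), false)), ?_⟩
        rw [class_eq_fiber' hm, psi_point hm hk 0 false, map_zero, mul_zero]
        simp only [Bool.true_xor, Bool.not_true, Bool.not_false]
        rw [← union_odd_tf hm hk hko2]

lemma sum_card : ∀ M : ℕ, (∑ k ∈ Finset.range (M+1), (if k % 2 = 0 then 4 else 2))
    = (if M % 2 = 1 then 3*(M+1) else 3*M+4) := by
  intro M
  induction M with
  | zero => simp
  | succ M ih =>
    rw [Finset.sum_range_succ, ih]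
    by_cases h : M % 2 = 1
    · have h2 : (M+1) % 2 = 0 := by omega
      rw [if_pos h, if_pos h2, if_neg (by omega)]
    · have h2 : ¬ ((M+1) % 2 = 0) := by omega
      rw [if_neg h, if_neg h2, if_pos (by omega)]
      ring

lemma inner_sum (k : ℕ) :
    (∑ b : Bool × ZMod 2, (if b.2 = 0 ∨ k % 2 = 0 then 1 else 0))
      = if k % 2 = 0 then 4 else 2 := by
  by_cases h : k % 2 = 0
  · simp [h]
  · simp only [h, or_false, if_neg h]
    decide

lemma Fcard (M : ℕ) :
    (((Finset.range (M+1)) ×ˢ (Finset.univ : Finset (Bool × ZMod 2))).filter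
        (fun t => t.2.2 = 0 ∨ t.1 % 2 = 0)).card
      = if M % 2 = 1 then 3*(M+1) else 3*M+4 := by
  rw [Finset.card_filter, Finset.sum_product]
  rw [show (∑ k ∈ Finset.range (M+1), ∑ b : Bool × ZMod 2,
      (if (k, b).2.2 = 0 ∨ (k, b).1 % 2 = 0 then 1 else 0))
    = ∑ k ∈ Finset.range (M+1), (if k % 2 = 0 then 4 else 2) from
      Finset.sum_congr rfl (fun k _ => inner_sum k)]
  exact sum_card M

lemma bool_xor_not : ∀ s : Bool, (true ^^ !s) = s := by decide

lemma part2 (m : ℕ) (hm : 1 ≤ m) :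
    Nat.card (((dihedral (2 * m)).double).TensorTauRho doubleRho) =
      (if Odd m then 3 * (m + 1) else 3 * m + 4) := by
  classical
  set F : Finset (ℕ × Bool × ZMod 2) :=
    ((Finset.range (m+1)) ×ˢ (Finset.univ : Finset (Bool × ZMod 2))).filter
      (fun t => t.2.2 = 0 ∨ t.1 % 2 = 0) with hF
  have hmemF : ∀ p : PP m, ψ m p ∈ F := by
    intro p
    rw [hF, Finset.mem_filter, Finset.mem_product]
    refine ⟨⟨Finset.mem_range.2 (Nat.lt_succ_of_le (kOf_le hm (dd p))),
      Finset.mem_univ _⟩, ?_⟩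
    rcases Nat.mod_two_eq_zero_or_one (kOf m (dd p)) with h | h
    · exact Or.inr h
    · left
      show (1 + par m (dd p)) * par m p.1.1 = 0
      rw [par_kOf hm, natpar1.2 h, zmod2_simp2, zero_mul]
  let f : ((dihedral (2 * m)).double).TensorTauRho doubleRho → {t // t ∈ F} :=
    Quotient.lift (fun p => (⟨ψ m p, hmemF p⟩ : {t // t ∈ F}))
      (fun a b h => Subtype.ext (psi_invariant hm a b h))
  have hinj : Function.Injective f := by
    intro a b
    refine Quotient.inductionOn₂ a b ?_
    intro p q h
    exact Quotient.sound (psi_complete hm p q (congrArg Subtype.val h))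
  have hsurj : Function.Surjective f := by
    rintro ⟨⟨k, s, j⟩, ht⟩
    rw [hF, Finset.mem_filter, Finset.mem_product] at ht
    obtain ⟨⟨hk1, -⟩, hj⟩ := ht
    have hk : k ≤ m := by have := Finset.mem_range.1 hk1; omega
    refine ⟨Quotient.mk _ (((if j = 0 then 0 else 1 : XX m), true),
      ((if j = 0 then 0 else 1 : XX m) + (k : XX m), !s)), Subtype.ext ?_⟩
    show ψ m _ = (k, s, j)
    rw [psi_point hm hk, bool_xor_not]
    rcases z2 j with rfl | rfl
    · rw [if_pos rfl, map_zero, mul_zero]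
    · have hke : k % 2 = 0 := by
        rcases hj with h | h
        · exact absurd (show (1:ZMod 2) = 0 from h) (by decide)
        · exact h
      rw [if_neg (by decide), map_one, natpar0.2 hke]
      norm_num
  rw [Nat.card_congr (Equiv.ofBijective f ⟨hinj, hsurj⟩), Nat.card_eq_finsetCard, hF, Fcard]
  rcases Nat.mod_two_eq_zero_or_one m with h | h
  · rw [if_neg (by omega), if_neg (by rw [Nat.odd_iff]; omega)]
  · rw [if_pos h, if_pos (Nat.odd_iff.2 h)]

end S17

/-- for `n = 2m` with `m ≥ 1`, the quotient `D(R_n) ⊗ D(R_n) / ⟨τ, ρ⟩`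
has exactly `3(m+1)` elements if `m` is odd and `3m+4` elements if `m` is even; its
elements are, for even `k ≤ m`: `E(k)ⱼ^{+,+} ∪ E(k)ⱼ^{−,−}` and
`E(k)ⱼ^{+,−} ∪ E(k)ⱼ^{−,+}` (`j = 0, 1`), and for odd `k ≤ m`:
`E(k)₀^{+,+} ∪ E(k)₀^{−,−} ∪ E(k)₁^{+,+} ∪ E(k)₁^{−,−}` and
`E(k)₀^{+,−} ∪ E(k)₀^{−,+} ∪ E(k)₁^{+,−} ∪ E(k)₁^{−,+}`. -/
theorem statement17 (m : ℕ) (hm : 1 ≤ m) :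
    ({S : Set ((ZMod (2 * m) × Bool) × (ZMod (2 * m) × Bool)) |
        ∃ p, S = {q | ((dihedral (2 * m)).double).tensorTauRhoEqv doubleRho p q}} =
      {S | ∃ k ≤ m,
        (Even k ∧
          (S = EsetD0 (2 * m) k true true ∪ EsetD0 (2 * m) k false false ∨
           S = EsetD0 (2 * m) k true false ∪ EsetD0 (2 * m) k false true ∨
           S = EsetD1 (2 * m) k true true ∪ EsetD1 (2 * m) k false false ∨
           S = EsetD1 (2 * m) k true false ∪ EsetD1 (2 * m) k false true)) ∨
        (Odd k ∧
          (S = EsetD0 (2 * m) k true true ∪ EsetD0 (2 * m) k false false ∪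
               EsetD1 (2 * m) k true true ∪ EsetD1 (2 * m) k false false ∨
           S = EsetD0 (2 * m) k true false ∪ EsetD0 (2 * m) k false true ∪
               EsetD1 (2 * m) k true false ∪ EsetD1 (2 * m) k false true))}) ∧
    Nat.card (((dihedral (2 * m)).double).TensorTauRho doubleRho) =
      (if Odd m then 3 * (m + 1) else 3 * m + 4) :=
  ⟨S17.part1 m hm, S17.part2 m hm⟩
end
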